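/- arXiv:2010.07374 — 9 statements merged into one kernel-verified Lean document; each statement's English description precedes it below -/
import Mathlib

section
/- For every integer ℓ ≥ 1 and every integer m ≥ 1, the 2-partitioning function of the class of decision stumps on ℝ^ℓ satisfies π²(m) ≤ (1/2)·Σ_{k=1}^{m−1} min{2ℓ, C(m,k)}, where C(m,k) is the binomial coefficient. -/
/-- A `c`-partition of a finite set `S`: a set of `c` pairwise disjoint nonempty
subsets (parts) whose union is `S`. -/
def IsPartition {α : Type*} (S : Finset α) (c : ℕ) (P : Finset (Finset α)) : Prop :=
  P.card = c ∧ (∀ p ∈ P, p.Nonempty) ∧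
    (∀ p ∈ P, ∀ q ∈ P, p ≠ q → Disjoint p q) ∧ (∀ x, x ∈ S ↔ ∃ p ∈ P, x ∈ p)

/-- A 2-partition `P = {A, S \ A}` of a sample `S ⊆ ℝ^ℓ` is realizable by a decision
stump if there are a feature `i` and threshold `θ` such that one of the two parts is
`{x ∈ S | x^i > θ}`. -/
def StumpRealizable (ℓ : ℕ) (S : Finset (Fin ℓ → ℝ))
    (P : Finset (Finset (Fin ℓ → ℝ))) : Prop :=
  IsPartition S 2 P ∧ ∃ (i : Fin ℓ) (θ : ℝ), S.filter (fun x => θ < x i) ∈ P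

/-- The 2-partitioning function of the class of decision stumps on `ℝ^ℓ`:
the largest number of distinct 2-partitions realizable by a stump on a sample
of `m` points. -/
noncomputable def stumpPi (ℓ m : ℕ) : ℕ :=
  sSup {n : ℕ | ∃ S : Finset (Fin ℓ → ℝ), S.card = m ∧
    n = {P | StumpRealizable ℓ S P}.ncard}

/-!
A realizable 2-partition is `{A, S \ A}` where one of the two parts is a threshold set
`{x ∈ S | θ < x i}`; distinct partitions have disjoint pairs of parts, so twice the number of
partitions is the number of their parts, each of size `k ∈ [1, m - 1]`. There are at most
`C(m, k)` parts of size `k`, and at most `2ℓ`: for a fixed feature the threshold sets form a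
chain, so they have at most one member of each size, and a part of size `k` is either a threshold
set of size `k` or the complement of one of size `m - k`.
-/

open Finset

namespace IsPartition

variable {α : Type*} {S A : Finset α} {c : ℕ} {P : Finset (Finset α)}

theorem subset (h : IsPartition S c P) (hA : A ∈ P) : A ⊆ S :=
  fun x hx => (h.2.2.2 x).2 ⟨A, hA, hx⟩

theorem eq_pair_sdiff [DecidableEq α] (h : IsPartition S 2 P) (hA : A ∈ P) :
    P = {A, S \ A} := by
  obtain ⟨hcard, -, hdisj, hcover⟩ := h
  obtain ⟨B, hB, hBA⟩ := exists_mem_ne (by omega : 1 < #P) A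
  have hP : P = {A, B} :=
    (eq_of_subset_of_card_le (insert_subset hA (singleton_subset_iff.2 hB))
      (by rw [hcard, card_pair hBA.symm])).symm
  have hBeq : B = S \ A := by
    ext x
    rw [mem_sdiff, hcover, hP]
    constructor
    · intro hx
      exact ⟨⟨B, by simp, hx⟩, fun hxA => disjoint_left.1 (hdisj B hB A hA hBA) hx hxA⟩
    · rintro ⟨⟨p, hp, hxp⟩, hxA⟩
      rcases mem_insert.1 hp with rfl | hp
      · exact absurd hxp hxA
      · rwa [mem_singleton.1 hp] at hxp
  rw [hP, hBeq]

theorem card_mem_Icc [DecidableEq α] (h : IsPartition S 2 P) (hA : A ∈ P) :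
    #A ∈ Icc 1 (#S - 1) := by
  have hcompl : S \ A ∈ P := by rw [h.eq_pair_sdiff hA]; simp
  have hA_pos : 0 < #A := card_pos.2 (h.2.1 A hA)
  have hcompl_pos : 0 < #(S \ A) := card_pos.2 (h.2.1 _ hcompl)
  rw [card_sdiff_of_subset (h.subset hA)] at hcompl_pos
  rw [mem_Icc]
  omega

theorem card_biUnion_eq_two_mul [DecidableEq α] {𝔓 : Finset (Finset (Finset α))}
    (h : ∀ P ∈ 𝔓, IsPartition S 2 P) : #(𝔓.biUnion id) = 2 * #𝔓 := by
  have hdisj : (𝔓 : Set (Finset (Finset α))).PairwiseDisjoint id := by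
    intro P hP Q hQ hPQ
    refine disjoint_left.2 fun A hAP hAQ => hPQ ?_
    rw [(h P hP).eq_pair_sdiff hAP, (h Q hQ).eq_pair_sdiff hAQ]
  rw [card_biUnion hdisj, sum_const_nat (f := fun P => #(id P)) fun P hP => (h P hP).1, mul_comm]

end IsPartition

section Threshold

variable {α ι β : Type*} [LinearOrder β]

def IsThresholdSet (S : Finset α) (g : ι → α → β) (A : Finset α) : Prop :=
  ∃ i θ, S.filter (fun x => θ < g i x) = A

theorem filter_lt_eq_of_card_eq (S : Finset α) (f : α → β) {θ θ' : β}
    (h : #(S.filter (fun x => θ < f x)) = #(S.filter (fun x => θ' < f x))) :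
    S.filter (fun x => θ < f x) = S.filter (fun x => θ' < f x) := by
  rcases le_total θ θ' with hθ | hθ
  · exact (eq_of_subset_of_card_le
      (monotone_filter_right S fun _ _ hx => hθ.trans_lt hx) h.le).symm
  · exact eq_of_subset_of_card_le
      (monotone_filter_right S fun _ _ hx => hθ.trans_lt hx) h.ge

theorem card_le_of_forall_isThresholdSet [Fintype ι] (S : Finset α) (g : ι → α → β)
    {𝒜 : Finset (Finset α)} {k : ℕ} (hcard : ∀ A ∈ 𝒜, #A = k)
    (hthr : ∀ A ∈ 𝒜, IsThresholdSet S g A) : #𝒜 ≤ Fintype.card ι := by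
  classical
  have hcover : 𝒜 ⊆ univ.biUnion fun i => 𝒜.filter fun A =>
      ∃ θ, S.filter (fun x => θ < g i x) = A := by
    intro A hA
    obtain ⟨i, θ, hθ⟩ := hthr A hA
    exact mem_biUnion.2 ⟨i, mem_univ i, mem_filter.2 ⟨hA, θ, hθ⟩⟩
  have hfeature : ∀ i ∈ (univ : Finset ι),
      #(𝒜.filter fun A => ∃ θ, S.filter (fun x => θ < g i x) = A) ≤ 1 := by
    intro i _
    refine card_le_one.2 fun A hA B hB => ?_
    obtain ⟨hA, θ, rfl⟩ := mem_filter.1 hA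
    obtain ⟨hB, θ', rfl⟩ := mem_filter.1 hB
    exact filter_lt_eq_of_card_eq S (g i) ((hcard _ hA).trans (hcard _ hB).symm)
  calc #𝒜 ≤ #(univ.biUnion _) := card_le_card hcover
    _ ≤ #(univ : Finset ι) * 1 := card_biUnion_le_card_mul _ _ _ hfeature
    _ = Fintype.card ι := by rw [mul_one, card_univ]

theorem card_le_two_mul_of_forall_isThresholdSet_or_compl [DecidableEq α] [Fintype ι]
    (S : Finset α) (g : ι → α → β) {𝒜 : Finset (Finset α)} {k : ℕ}
    (hsub : ∀ A ∈ 𝒜, A ⊆ S) (hcard : ∀ A ∈ 𝒜, #A = k)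
    (hthr : ∀ A ∈ 𝒜, IsThresholdSet S g A ∨ IsThresholdSet S g (S \ A)) :
    #𝒜 ≤ 2 * Fintype.card ι := by
  classical
  set 𝒜₁ := 𝒜.filter (IsThresholdSet S g)
  set 𝒜₂ := 𝒜.filter fun A => IsThresholdSet S g (S \ A)
  have hsplit : 𝒜 ⊆ 𝒜₁ ∪ 𝒜₂ := fun A hA => by
    rcases hthr A hA with h | h <;> simp [𝒜₁, 𝒜₂, hA, h]
  have h₁ : #𝒜₁ ≤ Fintype.card ι :=
    card_le_of_forall_isThresholdSet S g (k := k) (fun A hA => hcard A (mem_filter.1 hA).1)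
      fun A hA => (mem_filter.1 hA).2
  have h₂ : #(𝒜₂.image (S \ ·)) ≤ Fintype.card ι := by
    refine card_le_of_forall_isThresholdSet S g (k := #S - k) ?_ ?_ <;>
      simp only [mem_image, forall_exists_index, and_imp, forall_apply_eq_imp_iff₂]
    · intro A hA
      rw [card_sdiff_of_subset (hsub A (mem_filter.1 hA).1), hcard A (mem_filter.1 hA).1]
    · exact fun A hA => (mem_filter.1 hA).2
  have hinj : Set.InjOn (S \ ·) 𝒜₂ := fun A hA B hB hAB => by
    rw [← Finset.sdiff_sdiff_eq_self (hsub A (mem_filter.1 hA).1),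
      ← Finset.sdiff_sdiff_eq_self (hsub B (mem_filter.1 hB).1)]
    exact congrArg (S \ ·) hAB
  calc #𝒜 ≤ #𝒜₁ + #𝒜₂ := (card_le_card hsplit).trans (card_union_le _ _)
    _ = #𝒜₁ + #(𝒜₂.image (S \ ·)) := by rw [card_image_of_injOn hinj]
    _ ≤ 2 * Fintype.card ι := by omega

end Threshold

theorem StumpRealizable.isThresholdSet_or_compl {ℓ : ℕ} {S A : Finset (Fin ℓ → ℝ)}
    {P : Finset (Finset (Fin ℓ → ℝ))} (h : StumpRealizable ℓ S P) (hA : A ∈ P) :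
    IsThresholdSet S (fun i x => x i) A ∨ IsThresholdSet S (fun i x => x i) (S \ A) := by
  obtain ⟨hP, i, θ, hθ⟩ := h
  rw [hP.eq_pair_sdiff hA, mem_insert, mem_singleton] at hθ
  exact hθ.imp (fun h => ⟨i, θ, h⟩) fun h => ⟨i, θ, h⟩

theorem two_mul_ncard_stumpRealizable_le (ℓ : ℕ) (S : Finset (Fin ℓ → ℝ)) :
    2 * {P | StumpRealizable ℓ S P}.ncard ≤
      ∑ k ∈ Icc 1 (#S - 1), min (2 * ℓ) ((#S).choose k) := by
  classical
  set 𝔓 := S.powerset.powerset.filter (StumpRealizable ℓ S)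
  have h𝔓 : {P | StumpRealizable ℓ S P} = ↑𝔓 := by
    ext P
    simp only [Set.mem_ofPred_eq, coe_filter, mem_powerset, 𝔓]
    exact ⟨fun h => ⟨fun A hA => mem_powerset.2 (h.1.subset hA), h⟩, And.right⟩
  have hparts : ∀ A ∈ 𝔓.biUnion id, A ⊆ S ∧ #A ∈ Icc 1 (#S - 1) ∧
      (IsThresholdSet S (fun i x => x i) A ∨ IsThresholdSet S (fun i x => x i) (S \ A)) := by
    intro A hA
    obtain ⟨P, hP, hAP⟩ := mem_biUnion.1 hA
    have hP := (mem_filter.1 hP).2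
    exact ⟨hP.1.subset hAP, hP.1.card_mem_Icc hAP, hP.isThresholdSet_or_compl hAP⟩
  rw [h𝔓, Set.ncard_coe_finset,
    ← IsPartition.card_biUnion_eq_two_mul fun P hP => (mem_filter.1 hP).2.1,
    card_eq_sum_card_fiberwise fun A hA => (hparts A hA).2.1]
  gcongr with k
  have hfiber : ∀ A ∈ (𝔓.biUnion id).filter (#· = k), A ∈ 𝔓.biUnion id ∧ #A = k :=
    fun A hA => mem_filter.1 hA
  refine le_min ?_ ?_
  · exact (card_le_two_mul_of_forall_isThresholdSet_or_compl S (fun i x => x i)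
      (fun A hA => (hparts A (hfiber A hA).1).1) (fun A hA => (hfiber A hA).2)
      (fun A hA => (hparts A (hfiber A hA).1).2.2)).trans_eq (by rw [Fintype.card_fin])
  · exact (card_le_card fun A hA => mem_powersetCard.2
      ⟨(hparts A (hfiber A hA).1).1, (hfiber A hA).2⟩).trans_eq (card_powersetCard _ _)

theorem stump_two_partitioning_upper_bound_general (ℓ m : ℕ) :
    (stumpPi ℓ m : ℝ) ≤
      (1 / 2) * ∑ k ∈ Finset.Icc 1 (m - 1), (min (2 * ℓ) (m.choose k) : ℝ) := by
  set T := ∑ k ∈ Icc 1 (m - 1), min (2 * ℓ) (m.choose k)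
  have hle : stumpPi ℓ m ≤ T / 2 := csSup_le' <| by
    rintro n ⟨S, rfl, rfl⟩
    exact (Nat.le_div_iff_mul_le two_pos).2 <|
      (mul_comm _ _).trans_le (two_mul_ncard_stumpRealizable_le ℓ S)
  calc (stumpPi ℓ m : ℝ) ≤ ((T / 2 : ℕ) : ℝ) := by exact_mod_cast hle
    _ ≤ (T : ℝ) / 2 := Nat.cast_div_le
    _ = _ := by simp only [T, Nat.cast_sum, Nat.cast_min, Nat.cast_mul, Nat.cast_ofNat]; ring

theorem stump_two_partitioning_upper_bound (ℓ m : ℕ) (hℓ : 1 ≤ ℓ) (hm : 1 ≤ m) :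
    (stumpPi ℓ m : ℝ) ≤
      (1 / 2) * ∑ k ∈ Finset.Icc 1 (m - 1), (min (2 * ℓ) (m.choose k) : ℝ) :=
  stump_two_partitioning_upper_bound_general ℓ m
end

section
/- For all integers ℓ ≥ 1 and m ≥ 2 with 2ℓ ≤ m, the 2-partitioning function of the class of decision stumps on ℝ^ℓ satisfies π²(m) = ℓ·(m−1); that is, there exists a sample S ⊆ ℝ^ℓ of m points on which exactly ℓ·(m−1) distinct 2-partitions are realizable by a stump, and this is the maximum possible. -/
/-!
For a fixed feature the threshold sets form a chain, so their nonempty proper members have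
pairwise distinct sizes in `1, …, m - 1`: each feature yields at most `m - 1` partitions.

For the matching sample, index the points by `ZMod m` and let feature `i` rank point `j` by
`zigzag m` of the cyclic offset `j - i`. The top `k` points of feature `i` then form a cyclic
interval of length `k`, so the `ℓ (m - 1)` cuts of the sample are pairwise distinct.
-/

open Finset

section Partition

variable {α : Type*}

lemma finite_setOf_isPartition (S : Finset α) (c : ℕ) : {P | IsPartition S c P}.Finite :=
  S.powerset.powerset.finite_toSet.subset fun P hP => by
    simp only [coe_powerset, Set.mem_preimage, Set.mem_powerset_iff, Set.subset_def, mem_coe]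
    exact fun p hp x hx => (hP.2.2.2 x).2 ⟨p, hp, hx⟩

variable [DecidableEq α] {S A : Finset α} {P : Finset (Finset α)}

lemma isPartition_pair_sdiff (hA : A.Nonempty) (hAS : A ⊂ S) : IsPartition S 2 {A, S \ A} := by
  have hB : (S \ A).Nonempty := sdiff_nonempty.mpr hAS.2
  have hAB : A ≠ S \ A := fun h => by
    obtain ⟨x, hx⟩ := hA
    exact (mem_sdiff.1 (h ▸ hx)).2 hx
  refine ⟨card_pair hAB, by simp [hA, hB], ?_, fun x => ?_⟩
  · simp [disjoint_sdiff, sdiff_disjoint]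
  · have : x ∈ A → x ∈ S := fun h => hAS.subset h
    simp only [mem_insert, mem_singleton, exists_eq_or_imp, exists_eq_left, mem_sdiff]
    tauto

lemma IsPartition.eq_pair_sdiff_s1 (hP : IsPartition S 2 P) (hA : A ∈ P) :
    A.Nonempty ∧ A ⊂ S ∧ P = {A, S \ A} := by
  obtain ⟨hcard, hne, hdisj, hcover⟩ := hP
  obtain ⟨B, hBP, hBA⟩ : ∃ B ∈ P, B ≠ A := by
    by_contra! h
    have : P ⊆ {A} := fun B hB => mem_singleton.2 (h B hB)
    have := card_le_card this
    simp_all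
  have hPAB : P = {A, B} :=
    (eq_of_subset_of_card_le (by simp [insert_subset_iff, hA, hBP]) (by
      rw [hcard, card_pair hBA.symm])).symm
  have hAS : A ⊆ S := fun x hx => (hcover x).2 ⟨A, hA, hx⟩
  have hB : B = S \ A := by
    ext x
    have : x ∈ A → x ∉ B := fun h => disjoint_left.1 (hdisj A hA B hBP hBA.symm) h
    have := hcover x
    simp only [hPAB, mem_insert, mem_singleton, exists_eq_or_imp, exists_eq_left] at this
    rw [mem_sdiff]
    tauto
  refine ⟨hne A hA, Finset.ssubset_iff_subset_ne.2 ⟨hAS, fun h => ?_⟩, hB ▸ hPAB⟩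
  obtain ⟨x, hx⟩ := hne B hBP
  simp [hB, h] at hx

end Partition

section UpperCuts

variable {α β : Type*} [LinearOrder β]

noncomputable def upperCuts (S : Finset α) (f : α → β) : Finset (Finset α) :=
  open Classical in
  S.powerset.filter fun A => A.Nonempty ∧ A ⊂ S ∧ ∃ θ, S.filter (fun x => θ < f x) = A

lemma filter_lt_subset_filter_lt (S : Finset α) (f : α → β) {θ₁ θ₂ : β} (h : θ₁ ≤ θ₂) :
    S.filter (fun x => θ₂ < f x) ⊆ S.filter (fun x => θ₁ < f x) :=
  fun _ hx => by
    simp only [mem_filter] at hx ⊢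
    exact ⟨hx.1, h.trans_lt hx.2⟩

lemma card_upperCuts_le (S : Finset α) (f : α → β) : (upperCuts S f).card ≤ S.card - 1 := by
  classical
  calc (upperCuts S f).card ≤ (Icc 1 (S.card - 1)).card := by
        refine card_le_card_of_injOn card (fun A hA => ?_) fun A hA B hB hAB => ?_
        · simp only [upperCuts, coe_filter, Set.mem_ofPred_eq] at hA
          have := card_lt_card hA.2.2.1
          simp only [coe_Icc, Set.mem_Icc]
          have := hA.2.1.card_pos
          omega
        · simp only [upperCuts, coe_filter, Set.mem_ofPred_eq] at hA hB
          obtain ⟨θA, rfl⟩ := hA.2.2.2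
          obtain ⟨θB, rfl⟩ := hB.2.2.2
          rcases le_total θA θB with h | h
          · exact (eq_of_subset_of_card_le (filter_lt_subset_filter_lt S f h) hAB.le).symm
          · exact eq_of_subset_of_card_le (filter_lt_subset_filter_lt S f h) hAB.ge
    _ = S.card - 1 := by simp

end UpperCuts

lemma ncard_setOf_stumpRealizable_le {ℓ : ℕ} (S : Finset (Fin ℓ → ℝ)) :
    {P | StumpRealizable ℓ S P}.ncard ≤ ℓ * (S.card - 1) := by
  classical
  let cutsOf (i : Fin ℓ) := (upperCuts S (· i)).image fun A => ({A, S \ A} : Finset (Finset _))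
  have hsub : {P | StumpRealizable ℓ S P} ⊆ univ.biUnion cutsOf := by
    rintro P ⟨hP, i, θ, hA⟩
    obtain ⟨hne, hss, rfl⟩ := hP.eq_pair_sdiff_s1 hA
    simp only [cutsOf, coe_biUnion, coe_image, mem_coe, mem_univ, Set.iUnion_true,
      Set.mem_iUnion, Set.mem_image]
    exact ⟨i, _, by simp [upperCuts, hne, hss, hss.1], rfl⟩
  calc {P | StumpRealizable ℓ S P}.ncard ≤ (univ.biUnion cutsOf).card := by
        rw [← Set.ncard_coe_finset]
        exact Set.ncard_le_ncard hsub (finite_toSet _)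
    _ ≤ ∑ i, (cutsOf i).card := card_biUnion_le
    _ ≤ ∑ i : Fin ℓ, (S.card - 1) :=
        sum_le_sum fun i _ => card_image_le.trans (card_upperCuts_le S _)
    _ = ℓ * (S.card - 1) := by simp

namespace ZMod

variable {m : ℕ} [NeZero m]

lemma val_sub_natCast (x : ZMod m) {a : ℕ} (ha : a < m) :
    (x - a).val = if a ≤ x.val then x.val - a else x.val + (m - a) := by
  split_ifs with h
  · rw [val_sub (by rwa [val_cast_of_lt ha]), val_cast_of_lt ha]
  · have hx : x - a = x + ((m - a : ℕ) : ZMod m) := by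
      rw [Nat.cast_sub ha.le, natCast_self, zero_sub, sub_eq_add_neg]
    rw [hx, val_add_of_lt] <;> rw [val_cast_of_lt (by omega)]
    omega

/-- The cyclic interval `{s, s + 1, …, s + (k - 1)}`. -/
def arc (s : ZMod m) (k : ℕ) : Finset (ZMod m) :=
  univ.filter fun j => (j - s).val < k

@[simp]
lemma mem_arc {s j : ZMod m} {k : ℕ} : j ∈ arc s k ↔ (j - s).val < k := by
  simp [arc]

lemma card_arc (s : ZMod m) {k : ℕ} (hk : k ≤ m) : (arc s k).card = k := by
  rw [← card_range k]
  refine card_bij (fun j _ => (j - s).val) (fun j hj => by simpa using hj)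
    (fun a _ b _ hab => by simpa using val_injective m hab) fun d hd => ?_
  have hdm : d < m := (mem_range.1 hd).trans_le hk
  exact ⟨s + d, by simpa [val_cast_of_lt hdm] using hd, by simp [val_cast_of_lt hdm]⟩

lemma compl_arc (s : ZMod m) {k : ℕ} (hk : k < m) :
    (arc s k)ᶜ = arc (s + (k : ZMod m)) (m - k) := by
  ext j
  have hx : j - (s + k) = (j - s) - k := by ring
  have := (j - s).val_lt
  simp only [mem_compl, mem_arc, hx, val_sub_natCast _ hk]
  split_ifs <;> omega

lemma eq_of_mem_arc_of_sub_one_notMem {s t : ZMod m} {k : ℕ} (ht : t ∈ arc s k)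
    (ht' : t - 1 ∉ arc s k) : t = s := by
  by_contra hts
  have hpos : (t - s).val ≠ 0 := by simpa [val_eq_zero, sub_eq_zero] using hts
  have h1 : 1 < m := by have := (t - s).val_lt; omega
  have hx : t - 1 - s = (t - s) - ((1 : ℕ) : ZMod m) := by push_cast; ring
  rw [mem_arc] at ht ht'
  rw [hx, val_sub_natCast _ h1] at ht'
  split_ifs at ht' <;> omega

lemma arc_injective {k : ℕ} (hk : 0 < k) (hkm : k < m) : Function.Injective (arc (m := m) · k) := by
  intro s s' (h : arc s k = arc s' k)
  refine (eq_of_mem_arc_of_sub_one_notMem (k := k) (t := s') ?_ ?_).symm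
  · simpa [h] using hk
  · have : s' - 1 - s' = ((m - 1 : ℕ) : ZMod m) := by simp [Nat.cast_sub NeZero.one_le]
    rw [h, mem_arc, this, val_cast_of_lt (by omega)]
    omega

end ZMod

/-- Ranks `0, 1, m - 1, 2, m - 2, …` by `0, 1, 2, 3, 4, …` (note `2 * 0 - 1 = 0` in `ℕ`), so the
`k` largest values are taken on an interval of length `k` around `m / 2`. -/
def zigzag (m d : ℕ) : ℕ := if 2 * d ≤ m then 2 * d - 1 else 2 * (m - d)

lemma zigzag_injOn (m : ℕ) : Set.InjOn (zigzag m) (Set.Iio m) := fun d₁ h₁ d₂ h₂ h => by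
  simp only [Set.mem_Iio] at h₁ h₂
  unfold zigzag at h
  split_ifs at h <;> omega

lemma le_zigzag_iff {m k d : ℕ} (hkm : k < m) (hd : d < m) :
    m - k ≤ zigzag m d ↔ (m - k) / 2 + 1 ≤ d ∧ d < (m - k) / 2 + 1 + k := by
  unfold zigzag
  split_ifs <;> omega

section ZigzagSample

open ZMod

variable {ℓ m : ℕ} [NeZero m]

noncomputable def zigzagPoint (ℓ m : ℕ) [NeZero m] (j : ZMod m) : Fin ℓ → ℝ :=
  fun i => zigzag m (j - ((i : ℕ) : ZMod m)).val

/-- The indices of the `k` points largest in feature `i`. -/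
def topSet (m : ℕ) [NeZero m] (i k : ℕ) : Finset (ZMod m) :=
  univ.filter fun j => m - k ≤ zigzag m (j - i).val

lemma topSet_eq_arc {i k : ℕ} (hk : 0 < k) (hkm : k < m) :
    topSet m i k = arc ((i : ZMod m) + (((m - k) / 2 + 1 : ℕ) : ZMod m)) k := by
  ext j
  have hx : j - ((i : ZMod m) + (((m - k) / 2 + 1 : ℕ) : ZMod m)) =
      (j - i) - (((m - k) / 2 + 1 : ℕ) : ZMod m) := by
    ring
  have := (j - i).val_lt
  simp only [topSet, mem_filter, mem_univ, true_and, mem_arc, hx,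
    le_zigzag_iff hkm (j - i).val_lt, val_sub_natCast _ (show (m - k) / 2 + 1 < m by omega)]
  split_ifs <;> omega

lemma card_topSet (i : ℕ) {k : ℕ} (hk : 0 < k) (hkm : k < m) : (topSet m i k).card = k := by
  rw [topSet_eq_arc hk hkm, card_arc _ hkm.le]

lemma eq_of_topSet_eq {i i' k k' : ℕ} (hi : i < m) (hi' : i' < m) (hk : 0 < k) (hkm : k < m)
    (hk' : 0 < k') (hkm' : k' < m) (h : topSet m i k = topSet m i' k') : i = i' ∧ k = k' := by
  have hkk : k = k' := by rw [← card_topSet i hk hkm, h, card_topSet i' hk' hkm']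
  subst hkk
  rw [topSet_eq_arc hk hkm, topSet_eq_arc hk hkm] at h
  have := congrArg ZMod.val (add_right_cancel (arc_injective hk hkm h))
  rw [val_cast_of_lt hi, val_cast_of_lt hi'] at this
  exact ⟨this, rfl⟩

/-- A top set is centred near `i + m / 2` and a bottom set near `i`; for `i, i' < ℓ ≤ m / 2` these
centres never meet. -/
lemma topSet_ne_compl_topSet {i i' k k' : ℕ} (hi : i < ℓ) (hi' : i' < ℓ) (hℓm : 2 * ℓ ≤ m)
    (hk : 0 < k) (hkm : k < m) (hk' : 0 < k') (hkm' : k' < m) :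
    topSet m i k ≠ (topSet m i' k')ᶜ := by
  intro h
  have hkk : m - k' = k := by
    rw [← card_topSet i hk hkm, h, card_compl, card_topSet i' hk' hkm', ZMod.card]
  rw [topSet_eq_arc hk hkm, topSet_eq_arc hk' hkm', compl_arc _ hkm', hkk] at h
  have hs := arc_injective hk hkm h
  have e := congrArg (Nat.cast : ℕ → ZMod m) (show
    i + ((m - k) / 2 + k - k / 2) + (k / 2 + 1) + k' = i + ((m - k) / 2 + 1) + m by omega)
  have hcast : ((i + ((m - k) / 2 + k - k / 2) : ℕ) : ZMod m) = (i' : ZMod m) := by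
    push_cast at e hs ⊢
    linear_combination e + hs + natCast_self m
  have := congrArg ZMod.val hcast
  rw [val_cast_of_lt (by omega), val_cast_of_lt (by omega)] at this
  omega

noncomputable def zigzagSample (ℓ m : ℕ) [NeZero m] : Finset (Fin ℓ → ℝ) :=
  univ.image (zigzagPoint ℓ m)

lemma zigzagPoint_injective (hℓ : 0 < ℓ) : Function.Injective (zigzagPoint ℓ m) := fun j j' h => by
  have := congrFun h ⟨0, hℓ⟩
  simp only [zigzagPoint, Nat.cast_zero, sub_zero, Nat.cast_inj] at this
  exact val_injective m (zigzag_injOn m (val_lt j) (val_lt j') this)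

lemma card_zigzagSample (hℓ : 0 < ℓ) : (zigzagSample ℓ m).card = m := by
  rw [zigzagSample, card_image_of_injective _ (zigzagPoint_injective hℓ), card_univ, ZMod.card]

lemma zigzagSample_sdiff_image (hℓ : 0 < ℓ) (T : Finset (ZMod m)) :
    zigzagSample ℓ m \ T.image (zigzagPoint ℓ m) = Tᶜ.image (zigzagPoint ℓ m) := by
  rw [zigzagSample, ← image_sdiff _ _ (zigzagPoint_injective hℓ), compl_eq_univ_sdiff]

lemma filter_zigzagSample (i : Fin ℓ) {k : ℕ} (hkm : k < m) :
    (zigzagSample ℓ m).filter (fun x => ((m - k - 1 : ℕ) : ℝ) < x i) =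
      (topSet m i k).image (zigzagPoint ℓ m) := by
  rw [zigzagSample, filter_image]
  congr 1
  ext j
  simp only [mem_filter, mem_univ, true_and, topSet, zigzagPoint, Nat.cast_lt]
  omega

lemma stumpRealizable_zigzagSample (hℓ : 0 < ℓ) (i : Fin ℓ) {k : ℕ} (hk : 0 < k) (hkm : k < m) :
    StumpRealizable ℓ (zigzagSample ℓ m)
      {(topSet m i k).image (zigzagPoint ℓ m),
        zigzagSample ℓ m \ (topSet m i k).image (zigzagPoint ℓ m)} := by
  have hcard : ((topSet m i k).image (zigzagPoint ℓ m)).card = k := by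
    rw [card_image_of_injective _ (zigzagPoint_injective hℓ), card_topSet i hk hkm]
  have hss : (topSet m i k).image (zigzagPoint ℓ m) ⊂ zigzagSample ℓ m :=
    (image_subset_image (subset_univ _)).ssubset_of_ne fun h => by
      have := card_zigzagSample (ℓ := ℓ) (m := m) hℓ
      rw [zigzagSample, ← h, hcard] at this
      omega
  refine ⟨isPartition_pair_sdiff (card_pos.1 (by omega)) hss, i, ((m - k - 1 : ℕ) : ℝ), ?_⟩
  rw [filter_zigzagSample i hkm]
  exact mem_insert_self _ _

lemma le_ncard_setOf_stumpRealizable_zigzagSample (hℓ : 0 < ℓ) (hℓm : 2 * ℓ ≤ m) :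
    ℓ * (m - 1) ≤ {P | StumpRealizable ℓ (zigzagSample ℓ m) P}.ncard := by
  let top (z : Fin ℓ × ℕ) := (topSet m z.1 z.2).image (zigzagPoint ℓ m)
  let cuts : Finset (Fin ℓ × ℕ) := univ ×ˢ Ioo 0 m
  let cut (z : Fin ℓ × ℕ) : Finset (Finset _) := {top z, zigzagSample ℓ m \ top z}
  have hcut : Set.InjOn cut ↑cuts := by
    rintro ⟨i, k⟩ hz ⟨i', k'⟩ hz' h
    simp only [cuts, coe_product, coe_univ, coe_Ioo, Set.mem_prod, Set.mem_univ, Set.mem_Ioo,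
      true_and] at hz hz'
    have hmem : top (i, k) ∈ cut (i', k') := h ▸ mem_insert_self _ _
    simp only [cut, top, mem_insert, mem_singleton, zigzagSample_sdiff_image hℓ,
      (image_injective (zigzagPoint_injective hℓ)).eq_iff] at hmem
    rcases hmem with hT | hT
    · obtain ⟨hi, hk⟩ := eq_of_topSet_eq (by omega) (by omega) hz.1 hz.2 hz'.1 hz'.2 hT
      simp [Fin.ext hi, hk]
    · exact absurd hT (topSet_ne_compl_topSet i.2 i'.2 hℓm hz.1 hz.2 hz'.1 hz'.2)
  calc ℓ * (m - 1) = (cuts : Set (Fin ℓ × ℕ)).ncard := by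
        simp [cuts]
    _ ≤ _ := Set.ncard_le_ncard_of_injOn _
        (fun z hz => by
          simp only [cuts, coe_product, coe_univ, coe_Ioo, Set.mem_prod, Set.mem_univ, Set.mem_Ioo,
            true_and] at hz
          exact stumpRealizable_zigzagSample hℓ z.1 hz.1 hz.2)
        hcut ((finite_setOf_isPartition _ 2).subset fun _ hP => hP.1)

end ZigzagSample

theorem stump_two_partitioning_eq_of_two_ell_le_general
    (ℓ m : ℕ) (hℓ : 1 ≤ ℓ) (h : 2 * ℓ ≤ m) :
    stumpPi ℓ m = ℓ * (m - 1) ∧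
      (∃ S : Finset (Fin ℓ → ℝ), S.card = m ∧
        {P | StumpRealizable ℓ S P}.ncard = ℓ * (m - 1)) ∧
      (∀ S : Finset (Fin ℓ → ℝ), S.card = m →
        {P | StumpRealizable ℓ S P}.ncard ≤ ℓ * (m - 1)) := by
  have : NeZero m := ⟨by omega⟩
  have hupper (S : Finset (Fin ℓ → ℝ)) (hS : S.card = m) :
      {P | StumpRealizable ℓ S P}.ncard ≤ ℓ * (m - 1) :=
    hS ▸ ncard_setOf_stumpRealizable_le S
  have hsample : {P | StumpRealizable ℓ (zigzagSample ℓ m) P}.ncard = ℓ * (m - 1) :=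
    (hupper _ (card_zigzagSample hℓ)).antisymm
      (le_ncard_setOf_stumpRealizable_zigzagSample hℓ h)
  refine ⟨IsGreatest.csSup_eq ⟨⟨_, card_zigzagSample hℓ, hsample.symm⟩, ?_⟩,
    ⟨_, card_zigzagSample hℓ, hsample⟩, hupper⟩
  rintro n ⟨S, hS, rfl⟩
  exact hupper S hS

theorem stump_two_partitioning_eq_of_two_ell_le
    (ℓ m : ℕ) (hℓ : 1 ≤ ℓ) (hm : 2 ≤ m) (h : 2 * ℓ ≤ m) :
    stumpPi ℓ m = ℓ * (m - 1) ∧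
      (∃ S : Finset (Fin ℓ → ℝ), S.card = m ∧
        {P | StumpRealizable ℓ S P}.ncard = ℓ * (m - 1)) ∧
      (∀ S : Finset (Fin ℓ → ℝ), S.card = m →
        {P | StumpRealizable ℓ S P}.ncard ≤ ℓ * (m - 1)) :=
  stump_two_partitioning_eq_of_two_ell_le_general ℓ m hℓ h
end

section
/- For every integer ℓ ≥ 1 and every integer m with 1 ≤ m ≤ 7, the 2-partitioning function of the class of decision stumps on ℝ^ℓ satisfies π²(m) = (1/2)·Σ_{k=1}^{m−1} min{2ℓ, C(m,k)}. -/
/-!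
Each stump-realizable 2-partition `{A, S \ A}` has two sides, and a side is a nonempty proper
subset of `S` that is a threshold set `{x ∈ S | θ < x^i}` or the complement of one; so `π²(m)` is
half the largest number of sides. The threshold sets of one feature form a chain, so they contain
at most one set of each size, and each feature yields at most two sides of size `k`: there are at
most `min (2ℓ, C(m, k))` sides of size `k`.

For `m ≤ 7` the bound is attained by a sample whose `i`-th coordinate ranks the points by the
`i`-th member of an explicit family of permutations of `Fin m`, chosen so that for every `t` the
bottom-`k` and top-`k` sets of its first `t` members number `min (2t, C(m, k))`.
-/

open Finset

section General

variable {α : Type*} [DecidableEq α]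

theorem ne_sdiff_of_nonempty {S A : Finset α} (hA : A.Nonempty) : A ≠ S \ A := by
  obtain ⟨x, hx⟩ := hA
  intro h
  exact (mem_sdiff.mp (h ▸ hx)).2 hx

theorem isPartition_two_iff {S : Finset α} {P : Finset (Finset α)} :
    IsPartition S 2 P ↔ ∃ A ⊆ S, A.Nonempty ∧ A ≠ S ∧ {A, S \ A} = P := by
  constructor
  · rintro ⟨hcard, hne, hdisj, hcover⟩
    obtain ⟨A, B, hAB, rfl⟩ := card_eq_two.mp hcard
    have hAS : A ⊆ S := fun x hx => (hcover x).mpr ⟨A, by simp, hx⟩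
    have hB : B = S \ A := by
      ext x
      have hd := disjoint_left.mp (hdisj A (by simp) B (by simp) hAB)
      have := hcover x
      aesop
    subst hB
    refine ⟨A, hAS, hne A (by simp), ?_, rfl⟩
    rintro rfl
    simpa using hne (A \ A) (by simp)
  · rintro ⟨A, hAS, hA, hAS', rfl⟩
    have hSA : (S \ A).Nonempty := sdiff_nonempty.mpr fun h => hAS' (hAS.antisymm h)
    refine ⟨card_pair (ne_sdiff_of_nonempty hA), ?_, ?_, fun x => ?_⟩
    · simp [hA, hSA]
    · simp only [mem_insert, mem_singleton]
      rintro p (rfl | rfl) q (rfl | rfl) hpq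
      exacts [absurd rfl hpq, disjoint_sdiff, sdiff_disjoint, absurd rfl hpq]
    · by_cases x ∈ A <;> aesop

theorem two_mul_card_image_pair_sdiff {S : Finset α} {𝒜 : Finset (Finset α)}
    (h𝒜 : ∀ A ∈ 𝒜, A ⊆ S ∧ A.Nonempty) (hcompl : ∀ A ∈ 𝒜, S \ A ∈ 𝒜) :
    2 * #(𝒜.image fun A => ({A, S \ A} : Finset (Finset α))) = #𝒜 := by
  rw [card_eq_sum_card_image (fun A => ({A, S \ A} : Finset (Finset α))) 𝒜, mul_comm,
    ← smul_eq_mul, ← sum_const]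
  refine sum_congr rfl fun P hP => ?_
  obtain ⟨A₀, hA₀, rfl⟩ := mem_image.mp hP
  have hfiber : {A ∈ 𝒜 | ({A, S \ A} : Finset (Finset α)) = {A₀, S \ A₀}} = {A₀, S \ A₀} := by
    ext A
    simp only [mem_filter, mem_insert, mem_singleton]
    constructor
    · rintro ⟨-, h⟩
      have hA : A ∈ ({A₀, S \ A₀} : Finset (Finset α)) := h ▸ mem_insert_self A {S \ A}
      simpa using hA
    · rintro (rfl | rfl)
      · exact ⟨hA₀, rfl⟩
      · rw [Finset.sdiff_sdiff_eq_self (h𝒜 A₀ hA₀).1, pair_comm]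
        exact ⟨hcompl A₀ hA₀, rfl⟩
  rw [hfiber, card_pair (ne_sdiff_of_nonempty (h𝒜 A₀ hA₀).2)]

end General

theorem eq_of_filter_lt_of_card_eq {α β : Type*} [LinearOrder β] {S A B : Finset α}
    {f : α → β} {a b : β} (hA : S.filter (a < f ·) = A) (hB : S.filter (b < f ·) = B)
    (h : #A = #B) : A = B := by
  subst hA hB
  have hmono : ∀ {a b : β}, a ≤ b → S.filter (b < f ·) ⊆ S.filter (a < f ·) :=
    fun hab => monotone_filter_right S fun _ _ => hab.trans_lt
  rcases le_total a b with hab | hba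
  · exact (eq_of_subset_of_card_le (hmono hab) h.le).symm
  · exact eq_of_subset_of_card_le (hmono hba) h.ge

section Stumps

variable {ℓ : ℕ}

open Classical in
noncomputable def stumpSides (ℓ : ℕ) (S : Finset (Fin ℓ → ℝ)) : Finset (Finset (Fin ℓ → ℝ)) :=
  {A ∈ S.powerset | A.Nonempty ∧ A ≠ S ∧
    ∃ (i : Fin ℓ) (θ : ℝ), S.filter (fun x => θ < x i) ∈ ({A, S \ A} : Finset _)}

theorem mem_stumpSides {S A : Finset (Fin ℓ → ℝ)} :
    A ∈ stumpSides ℓ S ↔ A ⊆ S ∧ A.Nonempty ∧ A ≠ S ∧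
      ∃ (i : Fin ℓ) (θ : ℝ), S.filter (fun x => θ < x i) ∈ ({A, S \ A} : Finset _) := by
  simp only [stumpSides, mem_filter, mem_powerset]

theorem sdiff_mem_stumpSides {S A : Finset (Fin ℓ → ℝ)} (hA : A ∈ stumpSides ℓ S) :
    S \ A ∈ stumpSides ℓ S := by
  obtain ⟨hAS, hA, hAS', i, θ, h⟩ := mem_stumpSides.mp hA
  refine mem_stumpSides.mpr ⟨sdiff_subset, sdiff_nonempty.mpr fun h => hAS' (hAS.antisymm h),
    ?_, i, θ, ?_⟩
  · obtain ⟨x, hx⟩ := hA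
    exact fun h => (mem_sdiff.mp (h.symm ▸ hAS hx)).2 hx
  · rwa [Finset.sdiff_sdiff_eq_self hAS, pair_comm]

theorem stumpRealizable_iff {S : Finset (Fin ℓ → ℝ)} {P : Finset (Finset (Fin ℓ → ℝ))} :
    StumpRealizable ℓ S P ↔ ∃ A ∈ stumpSides ℓ S, {A, S \ A} = P := by
  simp only [StumpRealizable, isPartition_two_iff, mem_stumpSides]
  constructor
  · rintro ⟨⟨A, hAS, hA, hAS', rfl⟩, hP⟩
    exact ⟨A, ⟨hAS, hA, hAS', hP⟩, rfl⟩
  · rintro ⟨A, ⟨hAS, hA, hAS', hP⟩, rfl⟩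
    exact ⟨⟨A, hAS, hA, hAS', rfl⟩, hP⟩

theorem two_mul_ncard_stumpRealizable (S : Finset (Fin ℓ → ℝ)) :
    2 * {P | StumpRealizable ℓ S P}.ncard = #(stumpSides ℓ S) := by
  have hset : {P | StumpRealizable ℓ S P} =
      ((stumpSides ℓ S).image fun A => ({A, S \ A} : Finset _) : Finset _) := by
    ext P
    simp [stumpRealizable_iff]
  rw [hset, Set.ncard_coe_finset]
  exact two_mul_card_image_pair_sdiff
    (fun A hA => ⟨(mem_stumpSides.mp hA).1, (mem_stumpSides.mp hA).2.1⟩)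
    fun A hA => sdiff_mem_stumpSides hA

theorem card_stumpSides_eq_sum (S : Finset (Fin ℓ → ℝ)) :
    #(stumpSides ℓ S) = ∑ k ∈ Icc 1 (#S - 1), #{A ∈ stumpSides ℓ S | #A = k} := by
  refine card_eq_sum_card_fiberwise fun A hA => ?_
  obtain ⟨hAS, hA, hAS', -⟩ := mem_stumpSides.mp hA
  have := card_lt_card (Finset.ssubset_iff_subset_ne.mpr ⟨hAS, hAS'⟩)
  simp only [coe_Icc, Set.mem_Icc]
  have := hA.card_pos
  omega

theorem card_stumpSides_filter_card_le_two_mul (S : Finset (Fin ℓ → ℝ)) (k : ℕ) :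
    #{A ∈ stumpSides ℓ S | #A = k} ≤ 2 * ℓ := by
  let IsThresholdSide (A : Finset (Fin ℓ → ℝ)) (ib : Fin ℓ × Bool) : Prop :=
    ∃ θ : ℝ, S.filter (fun x => θ < x ib.1) = bif ib.2 then A else S \ A
  have hexists : ∀ A ∈ {A ∈ stumpSides ℓ S | #A = k}, ∃ ib ∈ univ, IsThresholdSide A ib := by
    intro A hA
    obtain ⟨-, -, -, i, θ, hθ⟩ := mem_stumpSides.mp (mem_filter.mp hA).1
    rw [mem_insert, mem_singleton] at hθ
    rcases hθ with hθ | hθ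
    exacts [⟨(i, true), mem_univ _, θ, hθ⟩, ⟨(i, false), mem_univ _, θ, hθ⟩]
  have hunique : ∀ ib ∈ univ,
      ({A ∈ {A ∈ stumpSides ℓ S | #A = k} | IsThresholdSide A ib} : Set _).Subsingleton := by
    rintro ⟨i, b⟩ - A₁ ⟨hA₁, θ₁, h₁⟩ A₂ ⟨hA₂, θ₂, h₂⟩
    obtain ⟨hA₁, hk₁⟩ := mem_filter.mp hA₁
    obtain ⟨hA₂, hk₂⟩ := mem_filter.mp hA₂
    have hS₁ := (mem_stumpSides.mp hA₁).1
    have hS₂ := (mem_stumpSides.mp hA₂).1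
    cases b with
    | true => exact eq_of_filter_lt_of_card_eq h₁ h₂ (hk₁.trans hk₂.symm)
    | false =>
      refine (sdiff_right_inj hS₁ hS₂).mp (eq_of_filter_lt_of_card_eq h₁ h₂ ?_)
      rw [card_sdiff_of_subset hS₁, card_sdiff_of_subset hS₂, hk₁, hk₂]
  simpa [mul_comm] using card_le_card_of_forall_subsingleton IsThresholdSide hexists hunique

theorem card_stumpSides_filter_card_le_choose (S : Finset (Fin ℓ → ℝ)) (k : ℕ) :
    #{A ∈ stumpSides ℓ S | #A = k} ≤ (#S).choose k := by
  rw [← card_powersetCard]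
  refine card_le_card fun A hA => ?_
  rw [mem_filter, mem_stumpSides] at hA
  exact mem_powersetCard.mpr ⟨hA.1.1, hA.2⟩

theorem card_stumpSides_filter_card_le (S : Finset (Fin ℓ → ℝ)) (k : ℕ) :
    #{A ∈ stumpSides ℓ S | #A = k} ≤ min (2 * ℓ) ((#S).choose k) :=
  le_min (card_stumpSides_filter_card_le_two_mul S k) (card_stumpSides_filter_card_le_choose S k)

theorem card_stumpSides_le (S : Finset (Fin ℓ → ℝ)) :
    #(stumpSides ℓ S) ≤ ∑ k ∈ Icc 1 (#S - 1), min (2 * ℓ) ((#S).choose k) := by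
  rw [card_stumpSides_eq_sum]
  exact sum_le_sum fun k _ => card_stumpSides_filter_card_le S k

end Stumps

section Rankings

variable {m : ℕ}

def rankBelow (σ : Fin m → Fin m) (k : ℕ) : Finset (Fin m) := {j | (σ j : ℕ) < k}

theorem card_rankBelow {σ : Fin m → Fin m} (hσ : Function.Injective σ) {k : ℕ} (hk : k ≤ m) :
    #(rankBelow σ k) = k := by
  rw [card_equiv (Equiv.ofBijective σ (Finite.injective_iff_bijective.mp hσ))
    (t := {a : Fin m | (a : ℕ) < k}) (by simp [rankBelow]), Fin.card_filter_val_lt, min_eq_right hk]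

def rankingSides (σ : ℕ → Fin m → Fin m) (t k : ℕ) : Finset (Finset (Fin m)) :=
  (range t).biUnion fun s => {rankBelow (σ s) k, (rankBelow (σ s) (m - k))ᶜ}

/-- Negated so that the threshold set `{j | -k < x j i}` is the bottom-`k` set `rankBelow _ k`. -/
def rankingSample (T ℓ : ℕ) (σ : ℕ → Fin m → Fin m) (j : Fin m) : Fin ℓ → ℝ :=
  fun i => -((σ (min (i : ℕ) (T - 1)) j : ℕ) : ℝ)

theorem filter_rankingSample {T ℓ : ℕ} (σ : ℕ → Fin m → Fin m) (i : Fin ℓ) (k : ℕ) :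
    ({j | -(k : ℝ) < rankingSample T ℓ σ j i} : Finset (Fin m)) =
      rankBelow (σ (min (i : ℕ) (T - 1))) k := by
  ext j
  simp [rankingSample, rankBelow]

theorem injective_rankingSample {T ℓ : ℕ} {σ : ℕ → Fin m → Fin m} (hℓ : 0 < ℓ)
    (hσ : Function.Injective (σ 0)) :
    Function.Injective (rankingSample T ℓ σ) := by
  intro j j' h
  exact hσ (Fin.ext (by simpa [rankingSample] using congrFun h ⟨0, hℓ⟩))

theorem image_mem_stumpSides {ι : Type*} [Fintype ι] [DecidableEq ι] {ℓ : ℕ}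
    {x : ι → Fin ℓ → ℝ} (hx : Function.Injective x) {B : Finset ι} (hB : B.Nonempty)
    (hB' : B ≠ univ) (i : Fin ℓ) (θ : ℝ)
    (h : ({j | θ < x j i} : Finset ι) ∈ ({B, Bᶜ} : Finset _)) :
    B.image x ∈ stumpSides ℓ (univ.image x) := by
  refine mem_stumpSides.mpr ⟨image_subset_image (subset_univ B), hB.image x, ?_, i, θ, ?_⟩
  · exact (image_injective hx).ne hB'
  · rw [filter_image, ← image_sdiff _ _ hx, ← compl_eq_univ_sdiff]
    rw [mem_insert, mem_singleton] at h ⊢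
    exact h.imp (congrArg (image x)) (congrArg (image x))

theorem image_rankingSides_subset {T ℓ t k : ℕ} {σ : ℕ → Fin m → Fin m} (hℓ : 0 < ℓ)
    (hT : 0 < T) (hσ : ∀ s < T, Function.Injective (σ s)) (htℓ : t ≤ ℓ) (htT : t ≤ T)
    (hk : k ∈ Icc 1 (m - 1)) :
    (rankingSides σ t k).image (image (rankingSample T ℓ σ)) ⊆
      {A ∈ stumpSides ℓ (univ.image (rankingSample T ℓ σ)) | #A = k} := by
  have hx := injective_rankingSample (T := T) hℓ (hσ 0 hT)
  rw [mem_Icc] at hk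
  intro A hA
  obtain ⟨B, hB, rfl⟩ := mem_image.mp hA
  obtain ⟨s, hs, hB⟩ := mem_biUnion.mp hB
  rw [mem_range] at hs
  let i : Fin ℓ := ⟨s, by omega⟩
  have hi : min (i : ℕ) (T - 1) = s := by simp only [i]; omega
  have hσs := hσ s (by omega)
  obtain ⟨θ, hθ, hcard⟩ : ∃ θ : ℝ, ({j | θ < rankingSample T ℓ σ j i} : Finset _) ∈
      ({B, Bᶜ} : Finset _) ∧ #B = k := by
    rw [mem_insert, mem_singleton] at hB
    rcases hB with rfl | rfl
    · refine ⟨-k, by rw [filter_rankingSample, hi]; simp, card_rankBelow hσs (by omega)⟩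
    · refine ⟨-((m - k : ℕ) : ℝ), by rw [filter_rankingSample, hi]; simp, ?_⟩
      rw [card_compl, card_rankBelow hσs (by omega), Fintype.card_fin]
      omega
  refine mem_filter.mpr ⟨image_mem_stumpSides hx (card_pos.mp (by omega)) ?_ i θ hθ, ?_⟩
  · rintro rfl
    rw [card_univ, Fintype.card_fin] at hcard
    omega
  · rw [card_image_of_injective _ hx, hcard]

def IsOptimalRankingFamily (m T : ℕ) (σ : ℕ → Fin m → Fin m) : Prop :=
  0 < T ∧ (∀ s < T, Function.Injective (σ s)) ∧ (∀ k ∈ Icc 1 (m - 1), m.choose k ≤ 2 * T) ∧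
    ∀ t ≤ T, ∀ k ∈ Icc 1 (m - 1), #(rankingSides σ t k) = min (2 * t) (m.choose k)

theorem card_stumpSides_rankingSample {T ℓ : ℕ} {σ : ℕ → Fin m → Fin m} (hℓ : 0 < ℓ)
    (hσ : IsOptimalRankingFamily m T σ) :
    #(univ.image (rankingSample T ℓ σ)) = m ∧
      #(stumpSides ℓ (univ.image (rankingSample T ℓ σ))) =
        ∑ k ∈ Icc 1 (m - 1), min (2 * ℓ) (m.choose k) := by
  obtain ⟨hT, hinj, hsat, hsides⟩ := hσ
  have hx := injective_rankingSample (T := T) hℓ (hinj 0 hT)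
  have hS : #(univ.image (rankingSample T ℓ σ)) = m := by
    rw [card_image_of_injective _ hx, card_univ, Fintype.card_fin]
  refine ⟨hS, ?_⟩
  rw [card_stumpSides_eq_sum, hS]
  refine sum_congr rfl fun k hk =>
    le_antisymm ((card_stumpSides_filter_card_le _ k).trans_eq (by rw [hS])) ?_
  calc min (2 * ℓ) (m.choose k) = #(rankingSides σ (min ℓ T) k) := by
        rw [hsides _ (min_le_right _ _) k hk]
        have := hsat k hk
        omega
    _ = #((rankingSides σ (min ℓ T) k).image (image (rankingSample T ℓ σ))) :=
        (card_image_of_injective _ (image_injective hx)).symm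
    _ ≤ _ := card_le_card
        (image_rankingSides_subset hℓ hT hinj (min_le_left _ _) (min_le_right _ _) hk)

end Rankings

theorem two_mul_stumpPi_eq {ℓ m N : ℕ}
    (hle : ∀ S : Finset (Fin ℓ → ℝ), #S = m → #(stumpSides ℓ S) ≤ N)
    (hattained : ∃ S : Finset (Fin ℓ → ℝ), #S = m ∧ #(stumpSides ℓ S) = N) :
    2 * stumpPi ℓ m = N := by
  obtain ⟨S₀, hS₀, hN⟩ := hattained
  suffices IsGreatest {n | ∃ S : Finset (Fin ℓ → ℝ), #S = m ∧
      n = {P | StumpRealizable ℓ S P}.ncard} {P | StumpRealizable ℓ S₀ P}.ncard by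
    rw [stumpPi, this.csSup_eq, two_mul_ncard_stumpRealizable, hN]
  refine ⟨⟨S₀, hS₀, rfl⟩, ?_⟩
  rintro n ⟨S, hS, rfl⟩
  have h₀ := two_mul_ncard_stumpRealizable S₀
  have h := two_mul_ncard_stumpRealizable S
  have := hle S hS
  omega

def rankings₃ : ℕ → Fin 3 → Fin 3
  | 0 => ![0, 1, 2]
  | _ => ![0, 2, 1]

def rankings₄ : ℕ → Fin 4 → Fin 4
  | 0 => ![0, 3, 1, 2]
  | 1 => ![2, 1, 0, 3]
  | _ => ![1, 0, 3, 2]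

def rankings₅ : ℕ → Fin 5 → Fin 5
  | 0 => ![0, 1, 3, 4, 2]
  | 1 => ![2, 0, 1, 3, 4]
  | 2 => ![3, 2, 0, 4, 1]
  | 3 => ![0, 4, 2, 3, 1]
  | _ => ![0, 4, 1, 2, 3]

def rankings₆ : ℕ → Fin 6 → Fin 6
  | 0 => ![1, 4, 5, 0, 3, 2]
  | 1 => ![0, 4, 3, 2, 1, 5]
  | 2 => ![2, 0, 3, 1, 5, 4]
  | 3 => ![4, 5, 0, 1, 2, 3]
  | 4 => ![0, 5, 1, 2, 4, 3]
  | 5 => ![2, 3, 0, 5, 1, 4]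
  | 6 => ![1, 3, 2, 4, 5, 0]
  | 7 => ![3, 5, 0, 2, 4, 1]
  | 8 => ![0, 4, 5, 3, 1, 2]
  | _ => ![0, 1, 2, 4, 3, 5]

def rankings₇ : ℕ → Fin 7 → Fin 7
  | 0 => ![0, 5, 4, 3, 1, 6, 2]
  | 1 => ![4, 0, 6, 5, 1, 3, 2]
  | 2 => ![4, 2, 3, 0, 1, 5, 6]
  | 3 => ![3, 6, 2, 5, 0, 1, 4]
  | 4 => ![6, 5, 1, 2, 4, 3, 0]
  | 5 => ![3, 4, 6, 1, 5, 0, 2]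
  | 6 => ![1, 2, 0, 3, 6, 4, 5]
  | 7 => ![0, 5, 6, 4, 2, 1, 3]
  | 8 => ![2, 3, 1, 6, 4, 0, 5]
  | 9 => ![5, 1, 2, 6, 4, 3, 0]
  | 10 => ![6, 2, 4, 0, 3, 1, 5]
  | 11 => ![0, 2, 6, 5, 4, 1, 3]
  | 12 => ![5, 0, 6, 3, 4, 1, 2]
  | 13 => ![1, 4, 3, 0, 5, 6, 2]
  | 14 => ![1, 2, 3, 5, 4, 6, 0]
  | 15 => ![5, 3, 0, 4, 2, 6, 1]
  | 16 => ![2, 0, 5, 1, 3, 6, 4]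
  | _ => ![4, 3, 2, 1, 6, 0, 5]

theorem stump_two_partitioning_eq_of_small_m_general
    (ℓ m : ℕ) (hℓ : 1 ≤ ℓ) (hm7 : m ≤ 7) :
    (stumpPi ℓ m : ℝ) =
      (1 / 2) * ∑ k ∈ Finset.Icc 1 (m - 1), (min (2 * ℓ) (m.choose k) : ℝ) := by
  obtain ⟨T, σ, hσ⟩ : ∃ T σ, IsOptimalRankingFamily m T σ := by
    unfold IsOptimalRankingFamily
    interval_cases m
    exacts [⟨1, fun _ => id, by decide⟩, ⟨1, fun _ => id, by decide⟩, ⟨1, fun _ => id, by decide⟩,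
      ⟨2, rankings₃, by decide⟩, ⟨3, rankings₄, by decide⟩, ⟨5, rankings₅, by decide⟩,
      ⟨10, rankings₆, by decide⟩, ⟨18, rankings₇, by decide⟩]
  have h := two_mul_stumpPi_eq (fun S hS => hS ▸ card_stumpSides_le S)
    ⟨_, card_stumpSides_rankingSample hℓ hσ⟩
  have h' : 2 * (stumpPi ℓ m : ℝ) = ∑ k ∈ Icc 1 (m - 1), (min (2 * ℓ) (m.choose k) : ℝ) := by
    exact_mod_cast h
  linarith

theorem stump_two_partitioning_eq_of_small_m
    (ℓ m : ℕ) (hℓ : 1 ≤ ℓ) (hm : 1 ≤ m) (hm7 : m ≤ 7) :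
    (stumpPi ℓ m : ℝ) =
      (1 / 2) * ∑ k ∈ Finset.Icc 1 (m - 1), (min (2 * ℓ) (m.choose k) : ℝ) :=
  stump_two_partitioning_eq_of_small_m_general ℓ m hℓ hm7
end

section
/- For all integers m and k with 1 ≤ k < m/2, there exists an injective map φ from the family of all k-element subsets of {1,…,m} to the family of all (k+1)-element subsets of {1,…,m} such that a ⊆ φ(a) for every k-element subset a. -/
/-!
Hall's marriage theorem for the inclusion relation between `k`-sets and `(k+1)`-sets of an
`n`-set. Each `k`-set lies in `n - k ≥ k + 1` sets of size `k + 1`, while each `(k+1)`-set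
contains only `k + 1` sets of size `k`; double counting the inclusions between a family `A` of
`k`-sets and its upper shadow therefore gives Hall's condition `#A ≤ #(upper shadow of A)`.
-/

open Finset Function

theorem Fintype.exists_injective_of_forall_le_card_filter_rel {α β : Type*}
    [Fintype α] [Fintype β] (r : α → β → Prop) [DecidableRel r] {n : ℕ} (hn : 0 < n)
    (hα : ∀ a, n ≤ #{b | r a b}) (hβ : ∀ b, #{a | r a b} ≤ n) :
    ∃ f : α → β, Injective f ∧ ∀ a, r a (f a) := by
  refine (Fintype.all_card_le_filter_rel_iff_exists_injective r).mp fun A ↦ ?_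
  set T : Finset β := {b | ∃ a ∈ A, r a b}
  have hAbove : ∀ a ∈ A, n ≤ #(T.bipartiteAbove r a) := fun a ha ↦
    (hα a).trans <| card_le_card fun b hb ↦ by
      simp only [mem_filter, mem_univ, true_and, bipartiteAbove, T] at hb ⊢
      exact ⟨⟨a, ha, hb⟩, hb⟩
  have hBelow : ∀ b ∈ T, #(A.bipartiteBelow r b) ≤ n := fun b _ ↦
    (card_le_card (filter_subset_filter _ (subset_univ A))).trans (hβ b)
  exact Nat.le_of_mul_le_mul_right (card_mul_le_card_mul r hAbove hBelow) hn

variable {α : Type*} [Fintype α] [DecidableEq α] {k : ℕ}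

theorem Finset.card_compl_le_card_supersets_card_succ {a : Finset α} (ha : #a = k) :
    #aᶜ ≤ #{b : {b : Finset α // #b = k + 1} | a ⊆ b.1} := by
  calc #aᶜ = #aᶜ.attach := (card_attach).symm
    _ ≤ #{b : {b : Finset α // #b = k + 1} | a ⊆ b.1} :=
        card_le_card_of_injOn
          (fun x ↦ ⟨insert x.1 a, by rw [card_insert_of_notMem (mem_compl.mp x.2), ha]⟩)
          (fun _ _ ↦ mem_filter.mpr ⟨mem_univ _, subset_insert _ _⟩)
          (fun x _ y _ hxy ↦ Subtype.ext <|
            (insert_inj (mem_compl.mp x.2)).mp (congrArg Subtype.val hxy))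

theorem Finset.card_subsets_card_pred_le {b : Finset α} (hb : #b = k + 1) :
    #{a : {a : Finset α // #a = k} | a.1 ⊆ b} ≤ k + 1 := by
  calc #{a : {a : Finset α // #a = k} | a.1 ⊆ b}
      ≤ #(b.powersetCard k) :=
        card_le_card_of_injOn Subtype.val
          (fun a ha ↦ mem_powersetCard.mpr ⟨(mem_filter.mp ha).2, a.2⟩)
          Subtype.val_injective.injOn
    _ = k + 1 := by rw [card_powersetCard, hb, Nat.choose_succ_self_right]

theorem Finset.exists_injective_subset_card_succ (hk : 2 * k < Fintype.card α) :
    ∃ φ : {a : Finset α // #a = k} → {b : Finset α // #b = k + 1},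
      Injective φ ∧ ∀ a, a.1 ⊆ (φ a).1 := by
  refine Fintype.exists_injective_of_forall_le_card_filter_rel
    (fun (a : {a : Finset α // #a = k}) (b : {b : Finset α // #b = k + 1}) ↦ a.1 ⊆ b.1)
    k.succ_pos (fun a ↦ ?_) (fun b ↦ card_subsets_card_pred_le b.2)
  have hcompl : k + 1 ≤ #a.1ᶜ := by rw [card_compl, a.2]; omega
  exact hcompl.trans (card_compl_le_card_supersets_card_succ a.2)

theorem exists_injective_superset_map_general (m k : ℕ) (hkm : 2 * k < m) :
    ∃ φ : {a : Finset (Fin m) // a.card = k} → {b : Finset (Fin m) // b.card = k + 1},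
      Function.Injective φ ∧ ∀ a, a.1 ⊆ (φ a).1 :=
  exists_injective_subset_card_succ (by rwa [Fintype.card_fin])

theorem exists_injective_superset_map (m k : ℕ) (hk : 1 ≤ k) (hkm : 2 * k < m) :
    ∃ φ : {a : Finset (Fin m) // a.card = k} → {b : Finset (Fin m) // b.card = k + 1},
      Function.Injective φ ∧ ∀ a, a.1 ⊆ (φ a).1 :=
  exists_injective_superset_map_general m k hkm
end

section
/- Let A and B be disjoint finite sets, let 𝛼 be an a-partition of A and 𝛽 a b-partition of B, and let c be an integer with 1 ≤ a ≤ c, 1 ≤ b ≤ c, and a + b ≥ c. Then the number of c-partitions of A ∪ B each of whose parts is either a part of 𝛼, a part of 𝛽, or the union of a part of 𝛼 with a part of 𝛽, equals C(a, c−b) · C(b, c−a) · (a+b−c)!, where C denotes the binomial coefficient. -/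
/-- `QSet A B Pa Pb c` : the set of `c`-partitions of `A ∪ B` each of whose parts is a
part of `Pa`, a part of `Pb`, or the union of a part of `Pa` with a part of `Pb`. -/
def QSet {α : Type*} [DecidableEq α] (A B : Finset α)
    (Pa Pb : Finset (Finset α)) (c : ℕ) : Set (Finset (Finset α)) :=
  {P | IsPartition (A ∪ B) c P ∧
    ∀ p ∈ P, p ∈ Pa ∨ p ∈ Pb ∨ ∃ q ∈ Pa, ∃ r ∈ Pb, p = q ∪ r}

/-!
A partition `γ` in `QSet A B Pa Pb c` is determined by the set `S = Pa \ γ` of parts of `Pa`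
that get merged, together with the map sending `q ∈ S` to the unique part `r` of `Pb` with
`q ∪ r ∈ γ`; this map is injective. Conversely, every `S ⊆ Pa` with an injection `f : S ↪ Pb`
yields such a partition, with `a + b - #S` parts. So `QSet A B Pa Pb c` is in bijection with the
pairs `(S, f)` with `#S = k := a + b - c`, of which there are
`C(a, k) · b (b - 1) ⋯ (b - k + 1) = C(a, k) C(b, k) k!`.
-/

theorem card_sigma_powersetCard_embedding {β γ : Type*} (X : Finset β) (Y : Finset γ)
    (k : ℕ) :
    Nat.card (Σ S : X.powersetCard k, S.1 ↪ Y) = X.card.choose k * Y.card.descFactorial k := by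
  classical
  rw [Nat.card_eq_fintype_card, Fintype.card_sigma]
  calc ∑ S : X.powersetCard k, Fintype.card (S.1 ↪ Y)
      = ∑ _S : X.powersetCard k, Y.card.descFactorial k :=
        Finset.sum_congr rfl fun S _ => by
          rw [Fintype.card_embedding_eq, Fintype.card_coe, Fintype.card_coe,
            (Finset.mem_powersetCard.mp S.2).2]
    _ = X.card.choose k * Y.card.descFactorial k := by
        rw [Finset.sum_const, Finset.card_univ, Fintype.card_coe, Finset.card_powersetCard,
          smul_eq_mul]

section

variable {α : Type*}

namespace IsPartition

variable {S : Finset α} {c : ℕ} {P : Finset (Finset α)} {p q : Finset α}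

theorem subset_of_mem (h : IsPartition S c P) (hp : p ∈ P) : p ⊆ S :=
  fun _ hx => (h.2.2.2 _).2 ⟨p, hp, hx⟩

theorem exists_mem (h : IsPartition S c P) {x : α} (hx : x ∈ S) : ∃ p ∈ P, x ∈ p :=
  (h.2.2.2 x).1 hx

theorem eq_of_mem_of_mem (h : IsPartition S c P) (hp : p ∈ P) (hq : q ∈ P) {x : α}
    (hxp : x ∈ p) (hxq : x ∈ q) : p = q := by
  by_contra hne
  exact Finset.disjoint_left.mp (h.2.2.1 p hp q hq hne) hxp hxq

theorem eq_of_subset_of_mem (h : IsPartition S c P) (hp : p ∈ P) (hq : q ∈ P) (hpq : p ⊆ q) :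
    p = q :=
  let ⟨_, hx⟩ := h.2.1 p hp
  h.eq_of_mem_of_mem hp hq hx (hpq hx)

theorem eq_of_subset {c' : ℕ} {Q : Finset (Finset α)} (hP : IsPartition S c P)
    (hQ : IsPartition S c' Q) (hPQ : P ⊆ Q) : P = Q := by
  refine hPQ.antisymm fun q hq => ?_
  obtain ⟨x, hx⟩ := hQ.2.1 q hq
  obtain ⟨p, hp, hxp⟩ := hP.exists_mem (hQ.subset_of_mem hq hx)
  rwa [hQ.eq_of_mem_of_mem hq (hPQ hp) hx hxp]

variable {A B : Finset α} {a b : ℕ} {Pa Pb : Finset (Finset α)}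

theorem disjoint (hAB : Disjoint A B) (hPa : IsPartition A a Pa) (hPb : IsPartition B b Pb) :
    Disjoint Pa Pb :=
  Finset.disjoint_left.mpr fun p hpa hpb =>
    let ⟨_, hx⟩ := hPa.2.1 p hpa
    Finset.disjoint_left.mp hAB (hPa.subset_of_mem hpa hx) (hPb.subset_of_mem hpb hx)

theorem union [DecidableEq α] (hAB : Disjoint A B) (hPa : IsPartition A a Pa)
    (hPb : IsPartition B b Pb) :
    IsPartition (A ∪ B) (a + b) (Pa ∪ Pb) := by
  refine ⟨?_, ?_, ?_, ?_⟩
  · rw [Finset.card_union_of_disjoint (hPa.disjoint hAB hPb), hPa.1, hPb.1]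
  · simp only [Finset.mem_union]
    rintro p (hp | hp)
    exacts [hPa.2.1 p hp, hPb.2.1 p hp]
  · show (↑(Pa ∪ Pb) : Set (Finset α)).PairwiseDisjoint id
    rw [Finset.coe_union, Set.pairwiseDisjoint_union]
    exact ⟨hPa.2.2.1, hPb.2.2.1, fun p hp r hr _ =>
      hAB.mono (hPa.subset_of_mem hp) (hPb.subset_of_mem hr)⟩
  · intro x
    simp only [Finset.mem_union, hPa.2.2.2 x, hPb.2.2.2 x]
    grind

end IsPartition

variable [DecidableEq α]

section

variable {A B q q' r r' : Finset α}

theorem union_inter_eq_left_of_disjoint (hAB : Disjoint A B) (hq : q ⊆ A) (hr : r ⊆ B) :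
    (q ∪ r) ∩ A = q := by
  rw [Finset.union_inter_distrib_right, Finset.inter_eq_left.mpr hq,
    Finset.disjoint_iff_inter_eq_empty.mp (hAB.symm.mono_left hr), Finset.union_empty]

theorem eq_and_eq_of_union_eq_union (hAB : Disjoint A B) (hq : q ⊆ A) (hq' : q' ⊆ A)
    (hr : r ⊆ B) (hr' : r' ⊆ B) (h : q ∪ r = q' ∪ r') : q = q' ∧ r = r' := by
  constructor
  · rw [← union_inter_eq_left_of_disjoint hAB hq hr, h,
      union_inter_eq_left_of_disjoint hAB hq' hr']
  · rw [Finset.union_comm q, Finset.union_comm q'] at h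
    rw [← union_inter_eq_left_of_disjoint hAB.symm hr hq, h,
      union_inter_eq_left_of_disjoint hAB.symm hr' hq']

end

/-- Every `q ∈ S` is merged with `f q`; the other parts of `Pa` and `Pb` are kept. -/
def mergePartition (Pa Pb S : Finset (Finset α)) (f : S ↪ Pb) : Finset (Finset α) :=
  ((Pa ∪ Pb) \ (S ∪ S.attach.map (f.trans (.subtype _)))) ∪
    S.attach.image fun q => q.1 ∪ (f q).1

variable {A B : Finset α} {a b c : ℕ} {Pa Pb S γ : Finset (Finset α)} {q r : Finset α}

theorem mem_mergePartition {f : S ↪ Pb} {p : Finset α} :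
    p ∈ mergePartition Pa Pb S f ↔
      (p ∈ Pa ∪ Pb ∧ p ∉ S ∧ ∀ q, (f q).1 ≠ p) ∨ ∃ q : S, q.1 ∪ (f q).1 = p := by
  simp [mergePartition]

theorem union_mem_mergePartition {f : S ↪ Pb} (q : S) :
    q.1 ∪ (f q).1 ∈ mergePartition Pa Pb S f :=
  mem_mergePartition.mpr (.inr ⟨q, rfl⟩)

theorem union_notMem_union (hAB : Disjoint A B) (hPa : IsPartition A a Pa)
    (hPb : IsPartition B b Pb) (hq : q ∈ Pa) (hr : r ∈ Pb) : q ∪ r ∉ Pa ∪ Pb := by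
  obtain ⟨x, hx⟩ := hPa.2.1 q hq
  obtain ⟨y, hy⟩ := hPb.2.1 r hr
  rw [Finset.mem_union]
  rintro (h | h)
  · exact Finset.disjoint_left.mp hAB (hPa.subset_of_mem h (Finset.mem_union_right q hy))
      (hPb.subset_of_mem hr hy)
  · exact Finset.disjoint_left.mp hAB (hPa.subset_of_mem hq hx)
      (hPb.subset_of_mem h (Finset.mem_union_left r hx))

theorem notMem_of_union_mem (hAB : Disjoint A B) (hPa : IsPartition A a Pa)
    (hPb : IsPartition B b Pb) (hγ : IsPartition (A ∪ B) c γ) (hq : q ∈ Pa) (hr : r ∈ Pb)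
    (hqr : q ∪ r ∈ γ) : q ∉ γ ∧ r ∉ γ := by
  have hdisj : Disjoint q r := hAB.mono (hPa.subset_of_mem hq) (hPb.subset_of_mem hr)
  constructor
  · intro hqγ
    have hrq : r ⊆ q := Finset.union_eq_left.mp
      (hγ.eq_of_subset_of_mem hqγ hqr Finset.subset_union_left).symm
    exact (hPb.2.1 r hr).ne_empty (hdisj.eq_bot_of_ge hrq)
  · intro hrγ
    have hqr' : q ⊆ r := Finset.union_eq_right.mp
      (hγ.eq_of_subset_of_mem hrγ hqr Finset.subset_union_right).symm
    exact (hPa.2.1 q hq).ne_empty (hdisj.eq_bot_of_le hqr')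

theorem existsUnique_union_mem (hAB : Disjoint A B) (hPa : IsPartition A a Pa)
    (hPb : IsPartition B b Pb) (hγ : γ ∈ QSet A B Pa Pb c) (hq : q ∈ Pa) (hqγ : q ∉ γ) :
    ∃! r, r ∈ Pb ∧ q ∪ r ∈ γ := by
  obtain ⟨x, hx⟩ := hPa.2.1 q hq
  have hxA : x ∈ A := hPa.subset_of_mem hq hx
  have hxB : x ∉ B := Finset.disjoint_left.mp hAB hxA
  obtain ⟨p, hp, hxp⟩ := hγ.1.exists_mem (Finset.mem_union_left B hxA)
  rcases hγ.2 p hp with hpa | hpb | ⟨q', hq', r, hr, rfl⟩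
  · exact absurd (hPa.eq_of_mem_of_mem hpa hq hxp hx ▸ hp) hqγ
  · exact absurd (hPb.subset_of_mem hpb hxp) hxB
  have hxq' : x ∈ q' := (Finset.mem_union.mp hxp).resolve_right fun h =>
    hxB (hPb.subset_of_mem hr h)
  obtain rfl := hPa.eq_of_mem_of_mem hq' hq hxq' hx
  refine ⟨r, ⟨hr, hp⟩, fun r' ⟨hr', hpr'⟩ => ?_⟩
  have hunion := hγ.1.eq_of_mem_of_mem hpr' hp (Finset.mem_union_left r' hx) hxp
  exact (eq_and_eq_of_union_eq_union hAB (hPa.subset_of_mem hq) (hPa.subset_of_mem hq)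
    (hPb.subset_of_mem hr') (hPb.subset_of_mem hr) hunion).2

theorem exists_embedding_union_mem (hAB : Disjoint A B) (hPa : IsPartition A a Pa)
    (hPb : IsPartition B b Pb) (hγ : γ ∈ QSet A B Pa Pb c) :
    ∃ f : ↥(Pa \ γ) ↪ Pb, ∀ q, q.1 ∪ (f q).1 ∈ γ := by
  have hpartner : ∀ q : ↥(Pa \ γ), ∃ r : Pb, (q : Finset α) ∪ r ∈ γ := fun q =>
    have ⟨hq, hqγ⟩ := Finset.mem_sdiff.mp q.2
    let ⟨r, ⟨hr, hqr⟩, _⟩ := existsUnique_union_mem hAB hPa hPb hγ hq hqγ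
    ⟨⟨r, hr⟩, hqr⟩
  choose g hg using hpartner
  refine ⟨⟨g, fun q q' hqq' => Subtype.ext ?_⟩, hg⟩
  obtain ⟨y, hy⟩ := hPb.2.1 _ (g q).2
  have hunion := hγ.1.eq_of_mem_of_mem (hg q) (hg q') (Finset.mem_union_right _ hy)
    (Finset.mem_union_right _ (hqq' ▸ hy))
  rw [← hqq'] at hunion
  exact (eq_and_eq_of_union_eq_union hAB
    (hPa.subset_of_mem (Finset.mem_sdiff.mp q.2).1) (hPa.subset_of_mem (Finset.mem_sdiff.mp q'.2).1)
    (hPb.subset_of_mem (g q).2) (hPb.subset_of_mem (g q).2) hunion).1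

theorem card_mergePartition (f : S ↪ Pb) (hAB : Disjoint A B) (hPa : IsPartition A a Pa)
    (hPb : IsPartition B b Pb) (hS : S ⊆ Pa) :
    (mergePartition Pa Pb S f).card = a + b - S.card := by
  set T := S.attach.map (f.trans (.subtype _))
  have hT : T ⊆ Pb := by
    intro r hr
    obtain ⟨q, -, rfl⟩ := Finset.mem_map.mp hr
    exact (f q).2
  have hST : S.card + T.card ≤ a + b := by
    rw [← Finset.card_union_of_disjoint ((hPa.disjoint hAB hPb).mono hS hT),
      ← (hPa.union hAB hPb).1]
    exact Finset.card_le_card (Finset.union_subset_union hS hT)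
  have hinj : Function.Injective fun q : S => q.1 ∪ (f q).1 := fun q q' h =>
    Subtype.ext (eq_and_eq_of_union_eq_union hAB (hPa.subset_of_mem (hS q.2))
      (hPa.subset_of_mem (hS q'.2)) (hPb.subset_of_mem (f q).2) (hPb.subset_of_mem (f q').2) h).1
  have hdisj : Disjoint ((Pa ∪ Pb) \ (S ∪ T)) (S.attach.image fun q => q.1 ∪ (f q).1) := by
    refine Finset.disjoint_left.mpr fun p hp hpM => ?_
    obtain ⟨q, -, rfl⟩ := Finset.mem_image.mp hpM
    exact union_notMem_union hAB hPa hPb (hS q.2) (f q).2 (Finset.mem_sdiff.mp hp).1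
  rw [mergePartition, Finset.card_union_of_disjoint hdisj,
    Finset.card_sdiff_of_subset (Finset.union_subset_union hS hT),
    Finset.card_union_of_disjoint ((hPa.disjoint hAB hPb).mono hS hT),
    Finset.card_image_of_injective _ hinj, (hPa.union hAB hPb).1]
  simp only [T, Finset.card_map, Finset.card_attach] at hST ⊢
  omega

theorem disjoint_of_mem_mergePartition (f : S ↪ Pb) (hAB : Disjoint A B)
    (hPa : IsPartition A a Pa) (hPb : IsPartition B b Pb) (hS : S ⊆ Pa) {p p' : Finset α}
    (hp : p ∈ mergePartition Pa Pb S f) (hp' : p' ∈ mergePartition Pa Pb S f) (hne : p ≠ p') :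
    Disjoint p p' := by
  have hU := (hPa.union hAB hPb).2.2.1
  have hqU (q : S) : q.1 ∈ Pa ∪ Pb := Finset.mem_union_left _ (hS q.2)
  have hfqU (q : S) : (f q).1 ∈ Pa ∪ Pb := Finset.mem_union_right _ (f q).2
  have hq_ne_f (q q' : S) : q.1 ≠ (f q').1 := fun h =>
    Finset.disjoint_left.mp (hPa.disjoint hAB hPb) (hS q.2) (h ▸ (f q').2)
  have hcross (p : Finset α) (hp : p ∈ Pa ∪ Pb ∧ p ∉ S ∧ ∀ q, (f q).1 ≠ p) (q : S) :
      Disjoint p (q.1 ∪ (f q).1) :=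
    Finset.disjoint_union_right.mpr ⟨hU p hp.1 q (hqU q) fun h => hp.2.1 (h ▸ q.2),
      hU p hp.1 (f q) (hfqU q) fun h => hp.2.2 q h.symm⟩
  rcases mem_mergePartition.mp hp with hp | ⟨q, rfl⟩ <;>
    rcases mem_mergePartition.mp hp' with hp' | ⟨q', rfl⟩
  · exact hU p hp.1 p' hp'.1 hne
  · exact hcross p hp q'
  · exact (hcross p' hp' q).symm
  · have hqq' : q ≠ q' := fun h => hne (h ▸ rfl)
    refine Finset.disjoint_union_left.mpr ⟨Finset.disjoint_union_right.mpr ⟨?_, ?_⟩,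
      Finset.disjoint_union_right.mpr ⟨?_, ?_⟩⟩
    · exact hU q (hqU q) q' (hqU q') (Subtype.coe_injective.ne hqq')
    · exact hU q (hqU q) (f q') (hfqU q') (hq_ne_f q q')
    · exact hU (f q) (hfqU q) q' (hqU q') (hq_ne_f q' q).symm
    · exact hU (f q) (hfqU q) (f q') (hfqU q') (Subtype.coe_injective.ne (f.injective.ne hqq'))

theorem mergePartition_mem_QSet (f : S ↪ Pb) (hAB : Disjoint A B) (hPa : IsPartition A a Pa)
    (hPb : IsPartition B b Pb) (hS : S ⊆ Pa) :
    mergePartition Pa Pb S f ∈ QSet A B Pa Pb (a + b - S.card) := by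
  have hU := hPa.union hAB hPb
  have hqU (q : S) : q.1 ∈ Pa ∪ Pb := Finset.mem_union_left _ (hS q.2)
  have hfqU (q : S) : (f q).1 ∈ Pa ∪ Pb := Finset.mem_union_right _ (f q).2
  refine ⟨⟨card_mergePartition f hAB hPa hPb hS, fun p hp => ?_,
    fun p hp p' hp' => disjoint_of_mem_mergePartition f hAB hPa hPb hS hp hp', fun x => ?_⟩,
    fun p hp => ?_⟩
  · rcases mem_mergePartition.mp hp with ⟨hpU, -⟩ | ⟨q, rfl⟩
    exacts [hU.2.1 p hpU, (hU.2.1 q (hqU q)).mono Finset.subset_union_left]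
  · refine ⟨fun hx => ?_, fun ⟨p, hp, hxp⟩ => ?_⟩
    · obtain ⟨u, hu, hxu⟩ := hU.exists_mem hx
      by_cases huS : u ∈ S
      · exact ⟨_, union_mem_mergePartition ⟨u, huS⟩, Finset.mem_union_left _ hxu⟩
      by_cases huf : ∃ q, (f q).1 = u
      · obtain ⟨q, rfl⟩ := huf
        exact ⟨_, union_mem_mergePartition q, Finset.mem_union_right _ hxu⟩
      · exact ⟨u, mem_mergePartition.mpr (.inl ⟨hu, huS, not_exists.mp huf⟩), hxu⟩
    · rcases mem_mergePartition.mp hp with ⟨hpU, -⟩ | ⟨q, rfl⟩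
      · exact hU.subset_of_mem hpU hxp
      · exact Finset.union_subset (hU.subset_of_mem (hqU q)) (hU.subset_of_mem (hfqU q)) hxp
  · rcases mem_mergePartition.mp hp with ⟨hpU, -⟩ | ⟨q, rfl⟩
    · exact (Finset.mem_union.mp hpU).imp_right .inl
    · exact .inr (.inr ⟨q, hS q.2, f q, (f q).2, rfl⟩)

theorem sdiff_mergePartition (f : S ↪ Pb) (hAB : Disjoint A B) (hPa : IsPartition A a Pa)
    (hPb : IsPartition B b Pb) (hS : S ⊆ Pa) : Pa \ mergePartition Pa Pb S f = S := by
  ext q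
  rw [Finset.mem_sdiff]
  refine ⟨fun ⟨hq, hqn⟩ => by_contra fun hqS => hqn (mem_mergePartition.mpr (.inl
    ⟨Finset.mem_union_left _ hq, hqS, fun q' h =>
      Finset.disjoint_left.mp (hPa.disjoint hAB hPb) hq (h ▸ (f q').2)⟩)), fun hqS => ?_⟩
  exact ⟨hS hqS, (notMem_of_union_mem hAB hPa hPb (mergePartition_mem_QSet f hAB hPa hPb hS).1
    (hS hqS) (f ⟨q, hqS⟩).2 (union_mem_mergePartition _)).1⟩

theorem mergePartition_injective (hAB : Disjoint A B) (hPa : IsPartition A a Pa)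
    (hPb : IsPartition B b Pb) (hS : S ⊆ Pa) : Function.Injective (mergePartition Pa Pb S) := by
  intro f f' h
  refine DFunLike.ext f f' fun q => Subtype.ext ?_
  have hγ := mergePartition_mem_QSet f hAB hPa hPb hS
  have hq : q.1 ∈ Pa \ mergePartition Pa Pb S f := by
    rw [sdiff_mergePartition f hAB hPa hPb hS]
    exact q.2
  exact (existsUnique_union_mem hAB hPa hPb hγ (hS q.2) (Finset.mem_sdiff.mp hq).2).unique
    ⟨(f q).2, union_mem_mergePartition q⟩ ⟨(f' q).2, h ▸ union_mem_mergePartition q⟩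

theorem mergePartition_eq_of_forall_union_mem (hAB : Disjoint A B) (hPa : IsPartition A a Pa)
    (hPb : IsPartition B b Pb) (hγ : γ ∈ QSet A B Pa Pb c) (f : ↥(Pa \ γ) ↪ Pb)
    (hf : ∀ q, q.1 ∪ (f q).1 ∈ γ) : mergePartition Pa Pb (Pa \ γ) f = γ := by
  have hPaPb := hPa.disjoint hAB hPb
  refine (hγ.1.eq_of_subset
    (mergePartition_mem_QSet f hAB hPa hPb Finset.sdiff_subset).1 fun p hp => ?_).symm
  rcases hγ.2 p hp with hpa | hpb | ⟨q, hq, r, hr, rfl⟩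
  · exact mem_mergePartition.mpr (.inl ⟨Finset.mem_union_left _ hpa,
      fun h => (Finset.mem_sdiff.mp h).2 hp,
      fun q h => Finset.disjoint_left.mp hPaPb hpa (h ▸ (f q).2)⟩)
  · exact mem_mergePartition.mpr (.inl ⟨Finset.mem_union_right _ hpb,
      fun h => Finset.disjoint_left.mp hPaPb (Finset.mem_sdiff.mp h).1 hpb,
      fun q h => (notMem_of_union_mem hAB hPa hPb hγ.1 (Finset.mem_sdiff.mp q.2).1 (f q).2
        (hf q)).2 (h ▸ hp)⟩)
  · have hqγ := (notMem_of_union_mem hAB hPa hPb hγ.1 hq hr hp).1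
    let q' : ↥(Pa \ γ) := ⟨q, Finset.mem_sdiff.mpr ⟨hq, hqγ⟩⟩
    have hfq : (f q').1 = r := (existsUnique_union_mem hAB hPa hPb hγ hq hqγ).unique
      ⟨(f q').2, hf q'⟩ ⟨hr, hp⟩
    exact mem_mergePartition.mpr (.inr ⟨q', by rw [hfq]⟩)

theorem ncard_QSet (hAB : Disjoint A B) (hPa : IsPartition A a Pa)
    (hPb : IsPartition B b Pb) (hc : c ≤ a + b) :
    (QSet A B Pa Pb c).ncard = Nat.card (Σ S : Pa.powersetCard (a + b - c), S.1 ↪ Pb) := by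
  have hmem (S : Pa.powersetCard (a + b - c)) (f : S.1 ↪ Pb) :
      mergePartition Pa Pb S f ∈ QSet A B Pa Pb c := by
    obtain ⟨hS, hcard⟩ := Finset.mem_powersetCard.mp S.2
    have := mergePartition_mem_QSet f hAB hPa hPb hS
    rwa [hcard, show a + b - (a + b - c) = c by omega] at this
  let Φ (d : Σ S : Pa.powersetCard (a + b - c), S.1 ↪ Pb) : QSet A B Pa Pb c :=
    ⟨mergePartition Pa Pb d.1 d.2, hmem d.1 d.2⟩
  refine (Nat.card_coe_set_eq _).symm.trans (Nat.card_eq_of_bijective Φ ⟨?_, ?_⟩).symm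
  · rintro ⟨S, f⟩ ⟨S', f'⟩ h
    have hSPa := (Finset.mem_powersetCard.mp S.2).1
    have h' : mergePartition Pa Pb S f = mergePartition Pa Pb S' f' := congrArg Subtype.val h
    obtain rfl : S = S' := Subtype.ext <| by
      rw [← sdiff_mergePartition f hAB hPa hPb hSPa, h',
        sdiff_mergePartition f' hAB hPa hPb (Finset.mem_powersetCard.mp S'.2).1]
    obtain rfl := mergePartition_injective hAB hPa hPb hSPa h'
    rfl
  · rintro ⟨γ, hγ⟩
    obtain ⟨f, hf⟩ := exists_embedding_union_mem hAB hPa hPb hγ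
    have heq := mergePartition_eq_of_forall_union_mem hAB hPa hPb hγ f hf
    have hcard : (Pa \ γ).card = a + b - c := by
      have h := card_mergePartition f hAB hPa hPb Finset.sdiff_subset
      have hle : (Pa \ γ).card ≤ a := hPa.1 ▸ Finset.card_le_card Finset.sdiff_subset
      rw [heq, hγ.1.1] at h
      omega
    exact ⟨⟨⟨Pa \ γ, Finset.mem_powersetCard.mpr ⟨Finset.sdiff_subset, hcard⟩⟩, f⟩,
      Subtype.ext heq⟩

end

theorem card_QSet_general {α : Type*} [DecidableEq α] (A B : Finset α) (hAB : Disjoint A B)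
    (a b c : ℕ) (hac : a ≤ c) (hbc : b ≤ c)
    (habc : c ≤ a + b) (Pa Pb : Finset (Finset α))
    (hPa : IsPartition A a Pa) (hPb : IsPartition B b Pb) :
    (QSet A B Pa Pb c).ncard =
      a.choose (c - b) * b.choose (c - a) * (a + b - c).factorial := by
  rw [ncard_QSet hAB hPa hPb habc, card_sigma_powersetCard_embedding, hPa.1, hPb.1,
    Nat.descFactorial_eq_factorial_mul_choose,
    Nat.choose_symm_of_eq_add (show a = (a + b - c) + (c - b) by omega),
    Nat.choose_symm_of_eq_add (show b = (a + b - c) + (c - a) by omega)]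
  ring

theorem card_QSet {α : Type*} [DecidableEq α] (A B : Finset α) (hAB : Disjoint A B)
    (a b c : ℕ) (ha : 1 ≤ a) (hb : 1 ≤ b) (hac : a ≤ c) (hbc : b ≤ c)
    (habc : c ≤ a + b) (Pa Pb : Finset (Finset α))
    (hPa : IsPartition A a Pa) (hPb : IsPartition B b Pb) :
    (QSet A B Pa Pb c).ncard =
      a.choose (c - b) * b.choose (c - a) * (a + b - c).factorial :=
  card_QSet_general A B hAB a b c hac hbc habc Pa Pb hPa hPb
end

section
/- Let ℓ ≥ 1, let S ⊆ ℝ^ℓ be a finite set with |S| = m ≥ 2, and for 1 ≤ k ≤ ⌊m/2⌋ let R_k(S) be the set of 2-partitions of S realizable by a stump that have a part of cardinality k. Then |R_k(S)| ≤ min{ℓ, C(m,k)/2} if m = 2k, and |R_k(S)| ≤ min{2ℓ, C(m,k)} otherwise, where C denotes the binomial coefficient. -/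
lemma pair_of_partition {α : Type*} [DecidableEq α] {S : Finset α}
    {P : Finset (Finset α)} (h : IsPartition S 2 P)
    {A : Finset α} (hA : A ∈ P) : A ⊆ S ∧ P = {A, S \ A} := by
  obtain ⟨hcard, hne, hdisj, hmem⟩ := h
  obtain ⟨a, b, hab, rfl⟩ := Finset.card_eq_two.mp hcard
  have key : ∀ A B : Finset α, A ≠ B → Disjoint A B →
      (∀ x, x ∈ S ↔ x ∈ A ∨ x ∈ B) → A ⊆ S ∧ B = S \ A := by
    intro A B hAB hd hm
    constructor
    · intro x hx; exact (hm x).mpr (Or.inl hx)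
    · ext x
      simp only [Finset.mem_sdiff, hm x]
      constructor
      · intro hx
        exact ⟨Or.inr hx, fun hxA => (Finset.disjoint_left.mp hd hxA) hx⟩
      · rintro ⟨hx | hx, hnx⟩
        · exact absurd hx hnx
        · exact hx
  have hm' : ∀ x, x ∈ S ↔ x ∈ a ∨ x ∈ b := by
    intro x
    rw [hmem x]
    simp
  rcases Finset.mem_insert.mp hA with h' | hA'
  · subst h'
    have := key A b hab (hdisj A (by simp) b (by simp) hab) hm'
    refine ⟨this.1, ?_⟩
    rw [← this.2]
  · have hA'' : A = b := Finset.mem_singleton.mp hA'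
    subst hA''
    have := key A a (Ne.symm hab) (hdisj A (by simp) a (by simp) (Ne.symm hab))
      (fun x => by rw [hm' x]; tauto)
    refine ⟨this.1, ?_⟩
    rw [← this.2]
    exact Finset.pair_comm a A

lemma filter_eq_of_card_eq {ℓ : ℕ} {S : Finset (Fin ℓ → ℝ)} {i : Fin ℓ} {θ₁ θ₂ : ℝ}
    (h : (S.filter fun x => θ₁ < x i).card = (S.filter fun x => θ₂ < x i).card) :
    (S.filter fun x => θ₁ < x i) = (S.filter fun x => θ₂ < x i) := by
  have sub : ∀ a b : ℝ, a ≤ b → (S.filter fun x => b < x i) ⊆ (S.filter fun x => a < x i) := by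
    intro a b hab x hx
    rw [Finset.mem_filter] at hx ⊢
    exact ⟨hx.1, lt_of_le_of_lt hab hx.2⟩
  rcases le_total θ₁ θ₂ with h' | h'
  · exact (Finset.eq_of_subset_of_card_le (sub _ _ h') h.le).symm
  · exact Finset.eq_of_subset_of_card_le (sub _ _ h') h.ge

lemma stump_same_feature {ℓ : ℕ} {S : Finset (Fin ℓ → ℝ)}
    {P₁ P₂ : Finset (Finset (Fin ℓ → ℝ))}
    (h₁ : IsPartition S 2 P₁) (h₂ : IsPartition S 2 P₂) {i : Fin ℓ} {θ₁ θ₂ : ℝ}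
    (hF₁ : S.filter (fun x => θ₁ < x i) ∈ P₁) (hF₂ : S.filter (fun x => θ₂ < x i) ∈ P₂)
    (hc : (S.filter (fun x => θ₁ < x i)).card = (S.filter (fun x => θ₂ < x i)).card) :
    P₁ = P₂ := by
  classical
  have he := filter_eq_of_card_eq hc
  have e₁ := (pair_of_partition h₁ hF₁).2
  have e₂ := (pair_of_partition h₂ hF₂).2
  rw [e₁, e₂, he]

lemma filter_card_k {ℓ m k : ℕ} {S : Finset (Fin ℓ → ℝ)} (hS : S.card = m)
    {P : Finset (Finset (Fin ℓ → ℝ))} (hP : IsPartition S 2 P)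
    {A : Finset (Fin ℓ → ℝ)} (hA : A ∈ P) (hpk : ∃ p ∈ P, p.card = k) :
    A.card = k ∨ A.card = m - k := by
  classical
  obtain ⟨hAS, hPe⟩ := pair_of_partition hP hA
  obtain ⟨p, hpP, hpc⟩ := hpk
  rw [hPe, Finset.mem_insert, Finset.mem_singleton] at hpP
  have hle : A.card ≤ m := hS ▸ Finset.card_le_card hAS
  rcases hpP with rfl | rfl
  · exact Or.inl hpc
  · have : (S \ A).card = m - A.card := by rw [Finset.card_sdiff_of_subset hAS, hS]
    omega

theorem stump_Rk_bound (ℓ : ℕ) (hℓ : 1 ≤ ℓ) (m : ℕ) (hm : 2 ≤ m)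
    (S : Finset (Fin ℓ → ℝ)) (hS : S.card = m)
    (k : ℕ) (hk : 1 ≤ k) (hk2 : k ≤ m / 2) :
    (m = 2 * k →
      {P | StumpRealizable ℓ S P ∧ ∃ p ∈ P, p.card = k}.ncard ≤
        min ℓ (m.choose k / 2)) ∧
    (m ≠ 2 * k →
      {P | StumpRealizable ℓ S P ∧ ∃ p ∈ P, p.card = k}.ncard ≤
        min (2 * ℓ) (m.choose k)) := by
  classical
  set T : Set (Finset (Finset (Fin ℓ → ℝ))) :=
    {P | StumpRealizable ℓ S P ∧ ∃ p ∈ P, p.card = k} with hTdef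
  have hTmem : ∀ P ∈ T, StumpRealizable ℓ S P ∧ ∃ p ∈ P, p.card = k := fun P hP => hP
  have h2k : 2 * k ≤ m := by
    have := (Nat.le_div_iff_mul_le (by norm_num : (0:ℕ) < 2)).mp hk2
    omega
  -- finiteness
  have hTfin : T.Finite := by
    apply Set.Finite.subset (S.powerset.powerset : Finset _).finite_toSet
    intro P hP
    rw [Finset.mem_coe, Finset.mem_powerset]
    intro A hA
    rw [Finset.mem_powerset]
    exact (pair_of_partition (hTmem P hP).1.1 hA).1
  -- chooser for (feature, threshold)
  let F : Finset (Finset (Fin ℓ → ℝ)) → Fin ℓ × ℝ := fun P =>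
    if h : ∃ p : Fin ℓ × ℝ, S.filter (fun x => p.2 < x p.1) ∈ P then h.choose
    else (⟨0, by omega⟩, 0)
  have hFspec : ∀ P ∈ T, S.filter (fun x => (F P).2 < x (F P).1) ∈ P := by
    intro P hP
    obtain ⟨i, θ, hiθ⟩ := (hTmem P hP).1.2
    have h : ∃ p : Fin ℓ × ℝ, S.filter (fun x => p.2 < x p.1) ∈ P := ⟨(i, θ), hiθ⟩
    simp only [F, dif_pos h]
    exact h.choose_spec
  have hFcard : ∀ P ∈ T, (S.filter (fun x => (F P).2 < x (F P).1)).card = k ∨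
      (S.filter (fun x => (F P).2 < x (F P).1)).card = m - k := fun P hP =>
    filter_card_k hS (hTmem P hP).1.1 (hFspec P hP) (hTmem P hP).2
  have hinj : ∀ P₁ ∈ T, ∀ P₂ ∈ T, (F P₁).1 = (F P₂).1 →
      (S.filter (fun x => (F P₁).2 < x (F P₁).1)).card =
      (S.filter (fun x => (F P₂).2 < x (F P₂).1)).card → P₁ = P₂ := by
    intro P₁ h₁ P₂ h₂ hi hca
    have hf₁ := hFspec P₁ h₁
    have hf₂ := hFspec P₂ h₂
    rw [hi] at hf₁ hca
    exact stump_same_feature (hTmem P₁ h₁).1.1 (hTmem P₂ h₂).1.1 hf₁ hf₂ hca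
  -- bound by ℓ when m = 2k
  have bound_l : m = 2 * k → T.ncard ≤ ℓ := by
    intro hmk
    have hle : T.ncard ≤ (Set.univ : Set (Fin ℓ)).ncard := by
      refine Set.ncard_le_ncard_of_injOn (fun P => (F P).1)
        (fun P hP => Set.mem_univ _) ?_ Set.finite_univ
      intro P₁ h₁ P₂ h₂ hi
      apply hinj P₁ h₁ P₂ h₂ hi
      have c₁ := hFcard P₁ h₁
      have c₂ := hFcard P₂ h₂
      have hmk' : m - k = k := by omega
      rw [hmk'] at c₁ c₂
      rcases c₁ with c₁ | c₁ <;> rcases c₂ with c₂ | c₂ <;> rw [c₁, c₂]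
    simpa [Set.ncard_univ, Nat.card_eq_fintype_card] using hle
  -- bound by choose/2 when m = 2k
  have bound_ch2 : m = 2 * k → T.ncard ≤ m.choose k / 2 := by
    intro hmk
    rw [Nat.le_div_iff_mul_le (by norm_num : (0:ℕ) < 2)]
    set Tf := hTfin.toFinset with hTf
    have hTT : ∀ P ∈ Tf, P ∈ T := fun P hP => hTfin.mem_toFinset.mp hP
    have hdisjP : ∀ P ∈ Tf, ∀ Q ∈ Tf, P ≠ Q → Disjoint (id P) (id Q) := by
      intro P hP Q hQ hPQ
      rw [Finset.disjoint_left]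
      intro A hAP hAQ
      have e₁ := (pair_of_partition (hTmem P (hTT P hP)).1.1 hAP).2
      have e₂ := (pair_of_partition (hTmem Q (hTT Q hQ)).1.1 hAQ).2
      exact hPQ (e₁.trans e₂.symm)
    have hcard2 : ∀ P ∈ Tf, P.card = 2 :=
      fun P hP => (hTmem P (hTT P hP)).1.1.1
    have hsub : Tf.biUnion id ⊆ S.powersetCard k := by
      intro A hA
      rw [Finset.mem_biUnion] at hA
      obtain ⟨P, hP, hAP⟩ := hA
      have hPT := hTmem P (hTT P hP)
      rw [Finset.mem_powersetCard]
      refine ⟨(pair_of_partition hPT.1.1 hAP).1, ?_⟩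
      have := filter_card_k hS hPT.1.1 hAP hPT.2
      omega
    have hbu : (Tf.biUnion id).card = 2 * Tf.card := by
      calc (Tf.biUnion id).card = ∑ P ∈ Tf, (id P).card := Finset.card_biUnion hdisjP
        _ = ∑ _P ∈ Tf, 2 := Finset.sum_congr rfl (fun P hP => hcard2 P hP)
        _ = 2 * Tf.card := by rw [Finset.sum_const, smul_eq_mul, mul_comm]
    have hcle := Finset.card_le_card hsub
    rw [hbu, Finset.card_powersetCard, hS] at hcle
    have hTc : T.ncard = Tf.card := Set.ncard_eq_toFinset_card T hTfin
    omega
  -- bound by 2ℓ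
  have bound_2l : T.ncard ≤ 2 * ℓ := by
    have hle : T.ncard ≤
        (((Finset.univ : Finset (Fin ℓ)) ×ˢ ({k, m - k} : Finset ℕ) : Finset _) :
          Set (Fin ℓ × ℕ)).ncard := by
      refine Set.ncard_le_ncard_of_injOn
        (fun P => ((F P).1, (S.filter (fun x => (F P).2 < x (F P).1)).card))
        ?_ ?_ (Finset.finite_toSet _)
      · intro P hP
        rw [Finset.mem_coe, Finset.mem_product]
        refine ⟨Finset.mem_univ _, ?_⟩
        rw [Finset.mem_insert, Finset.mem_singleton]
        exact hFcard P hP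
      · intro P₁ h₁ P₂ h₂ hpr
        rw [Prod.mk.injEq] at hpr
        exact hinj P₁ h₁ P₂ h₂ hpr.1 hpr.2
    rw [Set.ncard_coe_finset, Finset.card_product, Finset.card_univ,
      Fintype.card_fin] at hle
    have h2 : ({k, m - k} : Finset ℕ).card ≤ 2 :=
      le_trans (Finset.card_insert_le _ _) (by simp)
    calc T.ncard ≤ ℓ * ({k, m - k} : Finset ℕ).card := hle
      _ ≤ ℓ * 2 := Nat.mul_le_mul_left ℓ h2
      _ = 2 * ℓ := mul_comm ℓ 2
  -- bound by choose
  have bound_ch : T.ncard ≤ m.choose k := by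
    let K : Finset (Finset (Fin ℓ → ℝ)) → Finset (Fin ℓ → ℝ) := fun P =>
      if h : ∃ p, p ∈ P ∧ p.card = k then h.choose else ∅
    have hKspec : ∀ P ∈ T, K P ∈ P ∧ (K P).card = k := by
      intro P hP
      have h : ∃ p, p ∈ P ∧ p.card = k := by
        obtain ⟨p, hp, hpc⟩ := (hTmem P hP).2
        exact ⟨p, hp, hpc⟩
      simp only [K, dif_pos h]
      exact h.choose_spec
    have hle : T.ncard ≤ (↑(S.powersetCard k) : Set (Finset (Fin ℓ → ℝ))).ncard := by
      refine Set.ncard_le_ncard_of_injOn K ?_ ?_ (Finset.finite_toSet _)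
      · intro P hP
        have hs := hKspec P hP
        rw [Finset.mem_coe, Finset.mem_powersetCard]
        exact ⟨(pair_of_partition (hTmem P hP).1.1 hs.1).1, hs.2⟩
      · intro P₁ h₁ P₂ h₂ hK
        have s₁ := hKspec P₁ h₁
        have s₂ := hKspec P₂ h₂
        have e₁ := (pair_of_partition (hTmem P₁ h₁).1.1 s₁.1).2
        have e₂ := (pair_of_partition (hTmem P₂ h₂).1.1 s₂.1).2
        rw [e₁, e₂, hK]
    rwa [Set.ncard_coe_finset, Finset.card_powersetCard, hS] at hle
  constructor
  · intro hmk
    exact le_min (bound_l hmk) (bound_ch2 hmk)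
  · intro _
    exact le_min bound_2l bound_ch
end

section
/- For every integer n ≥ 1, the simple graph whose vertices are the n-element subsets of {1,…,2n+1} and whose edges join pairs of disjoint subsets admits a matching consisting of exactly ⌊C(2n+1, n)/2⌋ edges, where C denotes the binomial coefficient. -/
/-- The odd graph `O_n` (a Kneser graph): vertices are the `n`-element subsets of
`{1, …, 2n+1}`, two of them being adjacent iff they are disjoint. -/
def oddGraph (n : ℕ) : SimpleGraph {s : Finset (Fin (2 * n + 1)) // s.card = n} where
  Adj a b := a ≠ b ∧ Disjoint a.1 b.1
  symm := by
    constructor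
    intro a b h
    exact ⟨h.1.symm, h.2.symm⟩
  loopless := by
    constructor
    intro a h
    exact h.1 rfl

/-!
The odd graph is connected, and vertex-transitive since the symmetric group acts transitively
on `n`-sets. In a connected vertex-transitive graph a maximum matching leaves at most one vertex
exposed (Gallai): suppose a maximum matching `f` exposes `u ≠ w`, and let `t` be a neighbour of
`u` closer to `w`. We may assume that `f` covers `t`; by transitivity some maximum matching `g`
exposes `t`, and it covers `u`. The component of `u` in `f Δ g` is an alternating path, and since
`f` is maximum it ends at a `g`-exposed vertex `x`. If `x ≠ t`, switching `g` along the path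
gives a maximum matching exposing the adjacent vertices `u` and `t`, which is impossible. So
`x = t`, and switching `f` along the path gives a maximum matching exposing `t` and `w`, which are
closer than `u` and `w`. Induction on the distance concludes.
-/

open Finset Function

namespace SimpleGraph

variable {V : Type*} {G : SimpleGraph V} {f g : V → Option V} {u v w x y : V} {P : Finset V}

/-- A matching encoded by its partner function: `f v = some w` when `vw` is a matching edge,
`f v = none` when `v` is exposed. -/
def IsMatchingFn (G : SimpleGraph V) (f : V → Option V) : Prop :=
  ∀ ⦃v w⦄, f v = some w → G.Adj v w ∧ f w = some v

def IsPartnerClosed (f : V → Option V) (P : Finset V) : Prop :=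
  ∀ v ∈ P, ∀ w, f v = some w → w ∈ P

/-- What the switching argument uses of the vertex set `P` of the component of `u` in `f Δ g`,
when this component is a path from `u` to `x` starting with a `g`-edge. -/
structure IsAltPathSet (f g : V → Option V) (u x : V) (P : Finset V) : Prop where
  left_mem : u ∈ P
  right_mem : x ∈ P
  ne : x ≠ u
  left_covered : g u ≠ none
  closed_left : IsPartnerClosed f P
  closed_right : IsPartnerClosed g P
  exposed_iff : ∀ y ∈ P, f y = none ∨ g y = none ↔ y = u ∨ y = x
  not_exposed_both : f x ≠ none ∨ g x ≠ none

lemma IsAltPathSet.notMem (hP : IsAltPathSet f g u x P) (hf : f y = none) (hg : g y = none) :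
    y ∉ P := fun hy => by
  rcases (hP.exposed_iff y hy).1 (Or.inl hf) with rfl | rfl
  exacts [hP.left_covered hg, absurd hP.not_exposed_both (by simp [hf, hg])]

namespace IsMatchingFn

lemma adj (hf : IsMatchingFn G f) (h : f v = some w) : G.Adj v w := (hf h).1

lemma symm (hf : IsMatchingFn G f) (h : f v = some w) : f w = some v := (hf h).2

lemma map {W : Type*} {G' : SimpleGraph W} (hf : IsMatchingFn G f) (e : G ≃g G') :
    IsMatchingFn G' fun w => (f (e.symm w)).map e := by
  intro a b hab
  obtain ⟨c, hc, rfl⟩ := Option.map_eq_some_iff.1 hab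
  refine ⟨?_, by simp [hf.symm hc]⟩
  simpa using e.map_adj_iff.2 (hf.adj hc)

def toSubgraph (hf : IsMatchingFn G f) : G.Subgraph where
  verts := {v | f v ≠ none}
  Adj v w := f v = some w
  adj_sub h := hf.adj h
  edge_vert h := by simp [h]
  symm := ⟨fun _ _ h => hf.symm h⟩

lemma isMatching_toSubgraph (hf : IsMatchingFn G f) : hf.toSubgraph.IsMatching := fun v hv => by
  obtain ⟨w, hw⟩ := Option.ne_none_iff_exists'.1 hv
  exact ⟨w, hw, fun w' (hw' : f v = some w') => Option.some_injective _ (hw'.symm.trans hw)⟩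

end IsMatchingFn

section Exposed

variable [Fintype V]

def exposed (f : V → Option V) : Finset V := {v | f v = none}

@[simp]
lemma mem_exposed : v ∈ exposed f ↔ f v = none := by simp [exposed]

lemma card_exposed_map {W : Type*} [Fintype W] (e : V ≃ W) (f : V → Option V) :
    #(exposed fun w => (f (e.symm w)).map e) = #(exposed f) := by
  rw [← card_map e.toEmbedding]
  congr 1
  ext w
  simp [mem_map_equiv]

lemma IsMatchingFn.two_mul_ncard_edgeSet_add_card_exposed (hf : IsMatchingFn G f) :
    2 * hf.toSubgraph.edgeSet.ncard + #(exposed f) = Fintype.card V := by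
  classical
  let H := hf.toSubgraph.spanningCoe
  have hdeg : ∀ v, H.degree v + (if f v = none then 1 else 0) = 1 := fun v => by
    rw [← card_neighborFinset_eq_degree, show H.neighborFinset v = (f v).toFinset by
      ext w; rw [mem_neighborFinset]; simp [H, IsMatchingFn.toSubgraph]]
    cases f v <;> simp
  have hsum := sum_congr rfl fun v (_ : v ∈ univ) => hdeg v
  rw [sum_add_distrib, sum_boole, H.sum_degrees_eq_twice_card_edges, sum_const, card_univ,
    smul_eq_mul, mul_one] at hsum
  rw [← Subgraph.edgeSet_spanningCoe, ← coe_edgeFinset, Set.ncard_coe_finset]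
  simpa [exposed] using hsum

def IsMaximumMatchingFn (G : SimpleGraph V) (f : V → Option V) : Prop :=
  IsMatchingFn G f ∧ ∀ g, IsMatchingFn G g → #(exposed f) ≤ #(exposed g)

lemma exists_isMaximumMatchingFn (G : SimpleGraph V) : ∃ f, IsMaximumMatchingFn G f := by
  classical
  obtain ⟨f, hf, hmin⟩ := (univ.filter (IsMatchingFn G)).exists_min_image
    (fun f => #(exposed f)) ⟨fun _ => none, by simp [IsMatchingFn]⟩
  exact ⟨f, (mem_filter.1 hf).2, fun g hg => hmin g (by simpa using hg)⟩

namespace IsMaximumMatchingFn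

lemma of_card_exposed_le (hg : IsMaximumMatchingFn G g) (hf : IsMatchingFn G f)
    (h : #(exposed f) ≤ #(exposed g)) : IsMaximumMatchingFn G f :=
  ⟨hf, fun _ hh => h.trans (hg.2 _ hh)⟩

lemma map {W : Type*} [Fintype W] {G' : SimpleGraph W} (hf : IsMaximumMatchingFn G f)
    (e : G ≃g G') : IsMaximumMatchingFn G' fun w => (f (e.symm w)).map e := by
  refine ⟨hf.1.map e, fun g hg => ?_⟩
  have h := hf.2 _ (hg.map e.symm)
  have hfe : #(exposed fun w => (f (e.symm w)).map e) = #(exposed f) :=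
    card_exposed_map e.toEquiv f
  have hge : #(exposed fun v => (g (e.symm.symm v)).map e.symm) = #(exposed g) :=
    card_exposed_map e.symm.toEquiv g
  omega

end IsMaximumMatchingFn

end Exposed

section Update

variable [DecidableEq V]

namespace IsMatchingFn

lemma update_none (hf : IsMatchingFn G f) (h : f v = some w) :
    IsMatchingFn G (update (update f v none) w none) := by
  have hwv := hf.symm h
  intro a b hab
  simp only [update_apply] at hab ⊢
  split_ifs at hab with haw hav
  obtain ⟨hadj, hba⟩ := hf hab
  refine ⟨hadj, ?_⟩
  split_ifs with hbw hbv
  · subst hbw; exact hav (Option.some_injective _ (hba.symm.trans hwv))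
  · subst hbv; exact haw (Option.some_injective _ (hba.symm.trans h))
  · exact hba

lemma update_some (hf : IsMatchingFn G f) (hadj : G.Adj v w) (hv : f v = none)
    (hw : f w = none) : IsMatchingFn G (update (update f v (some w)) w (some v)) := by
  intro a b hab
  simp only [update_apply] at hab ⊢
  split_ifs at hab with haw hav
  · cases hab; simp_all [hadj.symm, hadj.ne]
  · cases hab; simp_all [hadj.ne]
  · obtain ⟨hadj', hba⟩ := hf hab
    have hbv : b ≠ v := by rintro rfl; simp_all
    have hbw : b ≠ w := by rintro rfl; simp_all
    simp [hadj', hba, hbv, hbw]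

lemma piecewise (hf : IsMatchingFn G f) (hg : IsMatchingFn G g)
    (hPf : IsPartnerClosed f P) (hPg : IsPartnerClosed g P) :
    IsMatchingFn G (P.piecewise g f) := by
  intro a b hab
  by_cases ha : a ∈ P
  · rw [piecewise_eq_of_mem _ _ _ ha] at hab
    rw [piecewise_eq_of_mem _ _ _ (hPg a ha b hab)]
    exact hg hab
  · rw [piecewise_eq_of_notMem _ _ _ ha] at hab
    have hb : b ∉ P := fun hb => ha (hPf b hb a (hf.symm hab))
    rw [piecewise_eq_of_notMem _ _ _ hb]
    exact hf hab

lemma isPartnerClosed_insert_insert (hf : IsMatchingFn G f) (hvw : f v = some w)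
    (hP : IsPartnerClosed (update (update f v none) w none) P) :
    IsPartnerClosed f (insert v (insert w P)) := by
  intro a ha b hab
  simp only [mem_insert] at ha ⊢
  by_cases hav : a = v
  · subst hav; exact Or.inr (Or.inl (Option.some_injective _ (hab.symm.trans hvw)))
  by_cases haw : a = w
  · subst haw; exact Or.inl (Option.some_injective _ (hab.symm.trans (hf.symm hvw)))
  exact Or.inr (Or.inr (hP a ((ha.resolve_left hav).resolve_left haw) b
    (by simp [hav, haw, hab])))

end IsMatchingFn

lemma IsPartnerClosed.insert_of_eq_none (hP : IsPartnerClosed f P) (hu : f u = none) :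
    IsPartnerClosed f (insert u P) := by
  intro a ha b hab
  rcases mem_insert.1 ha with rfl | ha
  · simp [hu] at hab
  · exact mem_insert_of_mem (hP a ha b hab)

lemma isAltPathSet_pair (hg : IsMatchingFn G g) (hu : f u = none) (huv : g u = some v)
    (hv : f v = none) : IsAltPathSet f g u v {u, v} where
  left_mem := by simp
  right_mem := by simp
  ne := (hg.adj huv).ne'
  left_covered := by simp [huv]
  closed_left := by simp [IsPartnerClosed, hu, hv]
  closed_right := by simp [IsPartnerClosed, huv, hg.symm huv]
  exposed_iff := by simp [hu, hv]
  not_exposed_both := by simp [hg.symm huv]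

lemma isAltPathSet_triple (hf : IsMatchingFn G f) (hg : IsMatchingFn G g) (hu : f u = none)
    (huv : g u = some v) (hvy : f v = some y) (hy : g y = none) :
    IsAltPathSet f g u y {u, v, y} where
  left_mem := by simp
  right_mem := by simp
  ne := by rintro rfl; simp [hf.symm hvy] at hu
  left_covered := by simp [huv]
  closed_left := by simp [IsPartnerClosed, hu, hvy, hf.symm hvy]
  closed_right := by simp [IsPartnerClosed, huv, hg.symm huv, hy]
  exposed_iff := by
    have hvu : v ≠ u := (hg.adj huv).ne'
    have hvy' : v ≠ y := (hf.adj hvy).ne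
    simp [hu, hvy, hy, hg.symm huv, hvu, hvy']
  not_exposed_both := by simp [hf.symm hvy]

lemma IsAltPathSet.extend (hf : IsMatchingFn G f) (hg : IsMatchingFn G g) (hu : f u = none)
    (huv : g u = some v) (hvy : f v = some y)
    (hP : IsAltPathSet (update (update f v none) y none) (update (update g u none) v none) y x P) :
    IsAltPathSet f g u x (insert u (insert v P)) := by
  have hvu : v ≠ u := (hg.adj huv).ne'
  have hyu : y ≠ u := fun h => by simpa [h, hu] using hf.symm hvy
  have huP : u ∉ P := hP.notMem (by simp [update_apply, hu]) (by simp [update_apply])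
  have hvP : v ∉ P := hP.notMem (by simp [update_apply]) (by simp)
  have hxv : x ≠ v := ne_of_mem_of_not_mem hP.right_mem hvP
  refine ⟨by simp, by simp [hP.right_mem], ne_of_mem_of_not_mem hP.right_mem huP, by simp [huv],
    ?_, hg.isPartnerClosed_insert_insert huv hP.closed_right, fun a ha => ?_, ?_⟩
  · have := hf.isPartnerClosed_insert_insert hvy hP.closed_left
    rw [insert_eq_of_mem hP.left_mem] at this
    exact this.insert_of_eq_none hu
  · rcases mem_insert.1 ha with rfl | ha
    · simp [hu]
    rcases mem_insert.1 ha with rfl | ha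
    · simp [hvy, hg.symm huv, hvu, hxv.symm]
    have hau := ne_of_mem_of_not_mem ha huP
    have hav := ne_of_mem_of_not_mem ha hvP
    by_cases hay : a = y
    · subst hay
      have hga : g a ≠ none := by simpa [update_apply, hau, hav] using hP.left_covered
      simp [hf.symm hvy, hga, hau, hP.ne.symm]
    · simpa [update_apply, hay, hav, hau] using hP.exposed_iff a ha
  · exact hP.not_exposed_both.imp (fun h h' => h (by simp [update_apply, h']))
      (fun h h' => h (by simp [update_apply, h']))

end Update

section Switch

variable [Fintype V] [DecidableEq V]

lemma exposed_update_none (f : V → Option V) (v w : V) :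
    exposed (update (update f v none) w none) = insert v (insert w (exposed f)) := by
  ext a
  by_cases hw : a = w <;> by_cases hv : a = v <;> simp [update_apply, hv, hw]

lemma exposed_update_some (f : V → Option V) (v w a b : V) :
    exposed (update (update f v (some a)) w (some b)) = ((exposed f).erase v).erase w := by
  ext c
  by_cases hw : c = w <;> by_cases hv : c = v <;> simp [update_apply, hv, hw] <;>
    split_ifs <;> simp

lemma card_exposed_piecewise (P : Finset V) (f g : V → Option V) :
    #(exposed (P.piecewise g f)) = #(exposed g ∩ P) + #(exposed f \ P) := by
  rw [← card_union_of_disjoint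
    (Finset.disjoint_left.2 fun _ ha hb => (mem_sdiff.1 hb).2 (mem_inter.1 ha).2)]
  congr 1
  ext v
  by_cases hv : v ∈ P <;> simp [hv]

theorem IsMatchingFn.exists_isAltPathSet (hf : IsMatchingFn G f) (hg : IsMatchingFn G g)
    (hu : f u = none) (hgu : g u ≠ none) : ∃ P x, IsAltPathSet f g u x P := by
  induction hk : Fintype.card V - #(exposed g) using Nat.strong_induction_on
    generalizing f g u with
  | _ k ih =>
  obtain ⟨v, huv⟩ := Option.ne_none_iff_exists'.mp hgu
  rcases hvy : f v with _ | y
  · exact ⟨_, _, isAltPathSet_pair hg hu huv hvy⟩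
  by_cases hy : g y = none
  · exact ⟨_, _, isAltPathSet_triple hf hg hu huv hvy hy⟩
  have hvu : v ≠ u := (hg.adj huv).ne'
  have hyv : y ≠ v := (hf.adj hvy).ne'
  have hyu : y ≠ u := by rintro rfl; simp [hf.symm hvy] at hu
  have hcard : #(exposed (update (update g u none) v none)) = #(exposed g) + 2 := by
    rw [exposed_update_none, card_insert_of_notMem (by simp [hvu.symm, hgu]),
      card_insert_of_notMem (by simp [hg.symm huv])]
  have hle := card_le_univ (exposed (update (update g u none) v none))
  -- the path continues from `y` along the two matchings with the edges `uv` and `vy` removed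
  obtain ⟨P, x, hP⟩ := ih _ (by omega) (u := y) (hf.update_none hvy) (hg.update_none huv)
    (by simp) (by simp [hyu, hyv, hy]) rfl
  exact ⟨_, _, hP.extend hf hg hu huv hvy⟩

namespace IsMaximumMatchingFn

lemma not_adj (hf : IsMaximumMatchingFn G f) (hv : f v = none) (hw : f w = none) :
    ¬ G.Adj v w := fun hadj => by
  have := hf.2 _ (hf.1.update_some hadj hv hw)
  rw [exposed_update_some, card_erase_of_mem (by simp [hadj.ne.symm, hw]),
    card_erase_of_mem (by simp [hv])] at this
  have h2 : #({v, w} : Finset V) ≤ #(exposed f) :=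
    card_le_card (by simp [insert_subset_iff, hv, hw])
  rw [card_pair hadj.ne] at h2
  omega

theorem exists_swap (hf : IsMaximumMatchingFn G f) (hg : IsMaximumMatchingFn G g)
    (hu : f u = none) (hgu : g u ≠ none) :
    ∃ P : Finset V, ∃ x, u ∈ P ∧ x ∈ P ∧ g x = none ∧ (∀ y ∈ P, f y = none → y = u) ∧
      (∀ y ∈ P, g y = none → y = x) ∧ IsMaximumMatchingFn G (P.piecewise g f) ∧
      IsMaximumMatchingFn G (P.piecewise f g) := by
  obtain ⟨P, x, hP⟩ := hf.1.exists_isAltPathSet hg.1 hu hgu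
  have hgf := hf.2 _ (hf.1.piecewise hg.1 hP.closed_left hP.closed_right)
  rw [card_exposed_piecewise, ← card_inter_add_card_sdiff (exposed f) P] at hgf
  have huf : u ∈ exposed f ∩ P := by simp [hu, hP.left_mem]
  by_cases hgx : g x = none
  · have hfx : f x ≠ none := hP.not_exposed_both.resolve_right (not_not.2 hgx)
    have hfP : ∀ y ∈ P, f y = none → y = u := fun y hy hfy =>
      ((hP.exposed_iff y hy).1 (Or.inl hfy)).resolve_right (by rintro rfl; exact hfx hfy)
    have hgP : ∀ y ∈ P, g y = none → y = x := fun y hy hgy =>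
      ((hP.exposed_iff y hy).1 (Or.inr hgy)).resolve_left (by rintro rfl; exact hgu hgy)
    have hf1 : exposed f ∩ P = {u} := by
      ext y; simp only [mem_inter, mem_exposed, mem_singleton]
      exact ⟨fun h => hfP y h.2 h.1, by rintro rfl; exact ⟨hu, hP.left_mem⟩⟩
    have hg1 : exposed g ∩ P = {x} := by
      ext y; simp only [mem_inter, mem_exposed, mem_singleton]
      exact ⟨fun h => hgP y h.2 h.1, by rintro rfl; exact ⟨hgx, hP.right_mem⟩⟩
    refine ⟨P, x, hP.left_mem, hP.right_mem, hgx, hfP, hgP,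
      hf.of_card_exposed_le (hf.1.piecewise hg.1 hP.closed_left hP.closed_right) ?_,
      hg.of_card_exposed_le (hg.1.piecewise hf.1 hP.closed_right hP.closed_left) ?_⟩
    · rw [card_exposed_piecewise, ← card_inter_add_card_sdiff (exposed f) P, hf1, hg1]; simp
    · rw [card_exposed_piecewise, ← card_inter_add_card_sdiff (exposed g) P, hf1, hg1]; simp
  · have hg0 : exposed g ∩ P = ∅ := by
      ext y
      simp only [mem_inter, mem_exposed, notMem_empty, iff_false, not_and]
      intro hgy hy
      rcases (hP.exposed_iff y hy).1 (Or.inr hgy) with rfl | rfl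
      exacts [hgu hgy, hgx hgy]
    rw [hg0, card_empty] at hgf
    have := card_pos.2 ⟨u, huf⟩
    omega

end IsMaximumMatchingFn

end Switch

def IsVertexTransitive (G : SimpleGraph V) : Prop :=
  ∀ a b : V, ∃ e : G ≃g G, e a = b

lemma Reachable.exists_adj_dist_lt (h : G.Reachable u w) (huw : u ≠ w) :
    ∃ t, G.Adj u t ∧ G.dist t w < G.dist u w := by
  obtain ⟨p, hp⟩ := h.exists_walk_length_eq_dist
  cases p with
  | nil => exact absurd rfl huw
  | cons hadj q =>
    rw [Walk.length_cons] at hp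
    exact ⟨_, hadj, (dist_le q).trans_lt (by omega)⟩

variable [Fintype V]

namespace IsMaximumMatchingFn

lemma exists_exposed (hG : G.IsVertexTransitive) (hf : IsMaximumMatchingFn G f)
    (hu : f u = none) (t : V) : ∃ g, IsMaximumMatchingFn G g ∧ g t = none := by
  obtain ⟨e, rfl⟩ := hG u t
  exact ⟨_, hf.map e, by simp [hu]⟩

variable [DecidableEq V]

theorem exists_closer_exposed_pair (hconn : G.Connected) (hG : G.IsVertexTransitive)
    (hf : IsMaximumMatchingFn G f) (hu : f u = none) (hw : f w = none) (huw : u ≠ w) :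
    ∃ f', IsMaximumMatchingFn G f' ∧
      ∃ u' w', f' u' = none ∧ f' w' = none ∧ u' ≠ w' ∧ G.dist u' w' < G.dist u w := by
  obtain ⟨t, hut, htw⟩ := (hconn u w).exists_adj_dist_lt huw
  have htw' : t ≠ w := by rintro rfl; exact hf.not_adj hu hw hut
  by_cases hft : f t = none
  · exact ⟨f, hf, t, w, hft, hw, htw', htw⟩
  obtain ⟨g, hg, hgt⟩ := hf.exists_exposed hG hu t
  have hgu : g u ≠ none := fun hgu => hg.not_adj hgu hgt hut
  obtain ⟨P, x, huP, hxP, hgx, hfP, hgP, hgf, hfg⟩ := hf.exists_swap hg hu hgu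
  by_cases hxt : x = t
  · subst hxt
    have hwP : w ∉ P := fun h => huw (hfP w h hw).symm
    exact ⟨_, hgf, x, w, by simp [hxP, hgx], by simp [hwP, hw], htw', htw⟩
  · have htP : t ∉ P := fun h => hxt (hgP t h hgt).symm
    exact absurd hut (hfg.not_adj (by simp [huP, hu]) (by simp [htP, hgt]))

theorem card_exposed_le_one (hconn : G.Connected) (hG : G.IsVertexTransitive)
    (hf : IsMaximumMatchingFn G f) : #(exposed f) ≤ 1 := by
  suffices ∀ d f u w, IsMaximumMatchingFn G f → f u = none → f w = none → u ≠ w →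
      G.dist u w ≠ d by
    by_contra! h
    obtain ⟨u, hu, w, hw, huw⟩ := one_lt_card.1 h
    exact this _ f u w hf (by simpa using hu) (by simpa using hw) huw rfl
  intro d
  induction d using Nat.strong_induction_on with
  | _ d ih =>
  rintro f u w hf hu hw huw rfl
  obtain ⟨f', hf', u', w', hu', hw', huw', hlt⟩ :=
    hf.exists_closer_exposed_pair hconn hG hu hw huw
  exact ih _ hlt f' u' w' hf' hu' hw' huw' rfl

end IsMaximumMatchingFn

end SimpleGraph

namespace oddGraph

variable {n : ℕ} {a b : {s : Finset (Fin (2 * n + 1)) // s.card = n}}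

lemma adj_of_mem_of_disjoint {i : Fin (2 * n + 1)} (hi : i ∈ a.1) (h : Disjoint a.1 b.1) :
    (oddGraph n).Adj a b :=
  ⟨fun hab => disjoint_left.1 h hi (hab ▸ hi), h⟩

lemma reachable_of_card_union (h : #(a.1 ∪ b.1) = n + 1) : (oddGraph n).Reachable a b := by
  have hn : 0 < n := by
    have := card_union_le a.1 b.1
    rw [a.2, b.2] at this
    omega
  let R : {s : Finset (Fin (2 * n + 1)) // s.card = n} :=
    ⟨(a.1 ∪ b.1)ᶜ, by rw [card_compl, h, Fintype.card_fin]; omega⟩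
  have hR : ∀ c : {s : Finset (Fin (2 * n + 1)) // s.card = n}, c.1 ⊆ a.1 ∪ b.1 →
      (oddGraph n).Adj c R := fun c hc => by
    obtain ⟨i, hi⟩ := card_pos.1 (c.2 ▸ hn)
    exact adj_of_mem_of_disjoint hi (disjoint_compl_right.mono_left hc)
  exact (hR a subset_union_left).reachable.trans (hR b subset_union_right).symm.reachable

lemma exists_reachable_exchange {i j : Fin (2 * n + 1)} (hi : i ∉ a.1) (hj : j ∈ a.1) :
    ∃ a', a'.1 = insert i (a.1.erase j) ∧ (oddGraph n).Reachable a a' := by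
  have hcard : #(insert i (a.1.erase j)) = n := by
    have := card_pos.2 ⟨j, hj⟩
    rw [card_insert_of_notMem (fun h => hi (mem_of_mem_erase h)), card_erase_of_mem hj, a.2]
    rw [a.2] at this
    omega
  refine ⟨⟨_, hcard⟩, rfl, reachable_of_card_union ?_⟩
  have : a.1 ∪ insert i (a.1.erase j) = insert i a.1 := by
    ext x
    by_cases hxj : x = j <;> simp [hxj, hj]
  rw [this, card_insert_of_notMem hi, a.2]

theorem connected (n : ℕ) : (oddGraph n).Connected := by
  obtain ⟨s, -, hs⟩ := exists_subset_card_eq (s := (univ : Finset (Fin (2 * n + 1)))) (n := n)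
    (by simp; omega)
  have : Nonempty {s : Finset (Fin (2 * n + 1)) // s.card = n} := ⟨⟨s, hs⟩⟩
  refine ⟨fun a b => ?_⟩
  induction hk : #(b.1 \ a.1) generalizing a with
  | zero =>
    have hba : b.1 ⊆ a.1 := sdiff_eq_empty_iff_subset.1 (card_eq_zero.1 hk)
    rw [Subtype.ext (eq_of_subset_of_card_le hba (by rw [a.2, b.2]))]
  | succ k ih =>
    obtain ⟨i, hi⟩ := card_pos.1 (by omega : 0 < #(b.1 \ a.1))
    obtain ⟨j, hj⟩ := card_pos.1
      (by rw [card_sdiff_comm (a.2.trans b.2.symm)]; omega : 0 < #(a.1 \ b.1))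
    rw [mem_sdiff] at hi hj
    obtain ⟨a', ha', haa'⟩ := exists_reachable_exchange hi.2 hj.1
    refine haa'.trans (ih a' ?_)
    have : b.1 \ a'.1 = (b.1 \ a.1).erase i := by
      ext x
      by_cases hxj : x = j <;> simp [ha', hxj, hj.2]
      tauto
    rw [this, card_erase_of_mem (mem_sdiff.2 hi), hk, Nat.add_sub_cancel]

def isoOfPerm (σ : Equiv.Perm (Fin (2 * n + 1))) : oddGraph n ≃g oddGraph n where
  toEquiv := σ.finsetCongr.subtypeEquiv (by simp)
  map_rel_iff' := by
    intro a b
    simp [oddGraph, Subtype.ext_iff]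

theorem isVertexTransitive (n : ℕ) : (oddGraph n).IsVertexTransitive := by
  intro a b
  have := Set.powersetCard.isPretransitive (α := Fin (2 * n + 1)) (n := n)
  obtain ⟨σ, hσ⟩ := MulAction.exists_smul_eq (Equiv.Perm (Fin (2 * n + 1)))
    (⟨a.1, a.2⟩ : Set.powersetCard (Fin (2 * n + 1)) n) ⟨b.1, b.2⟩
  refine ⟨isoOfPerm σ, Subtype.ext ?_⟩
  have := congrArg Subtype.val hσ
  simpa [isoOfPerm, Finset.map_eq_image, Finset.smul_finset_def] using this

end oddGraph

theorem oddGraph_exists_large_matching_general (n : ℕ) :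
    ∃ M : (oddGraph n).Subgraph, M.IsMatching ∧
      M.edgeSet.ncard = (2 * n + 1).choose n / 2 := by
  obtain ⟨f, hf⟩ := SimpleGraph.exists_isMaximumMatchingFn (oddGraph n)
  have hexposed := hf.card_exposed_le_one (oddGraph.connected n) (oddGraph.isVertexTransitive n)
  have hcount := hf.1.two_mul_ncard_edgeSet_add_card_exposed
  rw [Fintype.card_finset_len, Fintype.card_fin] at hcount
  exact ⟨hf.1.toSubgraph, hf.1.isMatching_toSubgraph, by omega⟩

theorem oddGraph_exists_large_matching (n : ℕ) (hn : 1 ≤ n) :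
    ∃ M : (oddGraph n).Subgraph, M.IsMatching ∧
      M.edgeSet.ncard = (2 * n + 1).choose n / 2 :=
  oddGraph_exists_large_matching_general n
end

section
/- For all integers m ≥ 2 and ℓ ≥ 1 with 2ℓ ≥ C(m, ⌊m/2⌋), there exist permutations σ⁽¹⁾, …, σ⁽ℓ⁾ of {1,…,m} such that every ⌊m/2⌋-element subset of {1,…,m} equals {σ⁽ⁱ⁾(1), …, σ⁽ⁱ⁾(⌊m/2⌋)} or {σ⁽ⁱ⁾(m−⌊m/2⌋+1), …, σ⁽ⁱ⁾(m)} for some i ∈ {1,…,ℓ}. -/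
/-- The prefix-set of length `j` of a permutation `σ` of `{1, …, m}` (coded by
`Fin m`): the set `{σ 1, …, σ j}` of images of the first `j` positions. -/
def prefixSet (m : ℕ) (σ : Equiv.Perm (Fin m)) (j : ℕ) : Finset (Fin m) :=
  (Finset.univ.filter (fun i : Fin m => (i : ℕ) < j)).image σ

/-- The suffix-set of length `j` of a permutation `σ` of `{1, …, m}` (coded by
`Fin m`): the set `{σ (m - j + 1), …, σ m}` of images of the last `j` positions. -/
def suffixSet (m : ℕ) (σ : Equiv.Perm (Fin m)) (j : ℕ) : Finset (Fin m) :=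
  (Finset.univ.filter (fun i : Fin m => m - j ≤ (i : ℕ))).image σ

/-!
Put `k = m / 2`. The prefix- and suffix-sets of length `k` of a permutation of `Fin m` are
disjoint `k`-sets, and every pair of disjoint `k`-sets arises this way, so it suffices to cover
the `k`-subsets by `ℓ` disjoint pairs, that is, to find a matching of the Kneser graph `K(m, k)`
that misses at most one vertex. For `m = 2k` complementation is a perfect matching. For
`m = 2k + 1` the Kneser graph is connected and vertex-transitive, and such a graph has a matching
missing at most one vertex (Gallai): choose a maximum matching `M` with two unmatched vertices
`u`, `v` as close as possible, let `w` be the neighbour of `u` on a shortest path to `v`, and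
move `M` by an automorphism to a maximum matching `N` missing `w`. A component of `M ∪ N` is a
path or a cycle, so by maximality the component of `u` contains no other `M`-unmatched vertex,
and exchanging `M` and `N` on it gives a maximum matching missing `u`, and also `w` unless the
component contains `w`; as `w` is closer to `u` than `v` is, it does. The same holds for `v`, so
`v` lies in the component of `u`, which is absurd.
-/

open Finset

namespace SimpleGraph

variable {V : Type*}

lemma Connected.two_mul_card_le_sum_degree_add_two [Fintype V] {G : SimpleGraph V}
    [DecidableRel G.Adj] (hG : G.Connected) : 2 * Fintype.card V ≤ ∑ v, G.degree v + 2 := by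
  classical
  have h := hG.card_vert_le_card_edgeSet_add_one
  rw [Nat.card_eq_fintype_card, Nat.card_eq_fintype_card, ← edgeFinset_card] at h
  rw [sum_degrees_eq_twice_card_edges]
  omega

lemma two_mul_card_reachable_le [Fintype V] [DecidableEq V] (G : SimpleGraph V)
    [DecidableRel G.Adj] (u : V) :
    2 * #{v | G.Reachable u v} ≤ ∑ v with G.Reachable u v, G.degree v + 2 := by
  set S : Set V := {v | G.Reachable u v}
  have hS : (G.connectedComponentMk u).supp = S := by
    ext v
    rw [ConnectedComponent.mem_supp_iff, ConnectedComponent.eq, reachable_comm]; rfl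
  have hconn : (G.induce S).Connected :=
    hS ▸ (G.connectedComponentMk u).connected_toSimpleGraph
  have h := hconn.two_mul_card_le_sum_degree_add_two
  have hdeg : ∀ v : S, (G.induce S).degree v = G.degree v := fun v =>
    degree_induce_of_neighborSet_subset fun w hw => v.2.trans (Adj.reachable hw)
  have hmem : ∀ v, v ∈ ({v | G.Reachable u v} : Finset V) ↔ v ∈ S :=
    fun _ => mem_filter_univ _
  rwa [Fintype.card_of_subtype _ hmem, Finset.sum_congr rfl (fun v _ => hdeg v),
    ← Finset.sum_subtype _ hmem (G.degree ·)] at h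

variable (G : SimpleGraph V)

/-- A matching of `G`, encoded as the involution of `V` that swaps the two ends of each matching
edge and fixes the unmatched vertices. -/
structure IsMatchingInvolution (f : V → V) : Prop where
  involutive : Function.Involutive f
  adj : ∀ v, f v ≠ v → G.Adj v (f v)

variable {G}

lemma IsMatchingInvolution.piecewise [DecidableEq V] {f g : V → V}
    (hf : G.IsMatchingInvolution f) (hg : G.IsMatchingInvolution g) {S : Finset V}
    (hfS : ∀ x ∈ S, f x ∈ S) (hgS : ∀ x ∈ S, g x ∈ S) :
    G.IsMatchingInvolution (S.piecewise g f) where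
  involutive x := by
    by_cases hx : x ∈ S
    · simp [hx, hgS x hx, hg.involutive x]
    · have hfx : f x ∉ S := fun h => hx (hf.involutive x ▸ hfS _ h)
      simp [hx, hfx, hf.involutive x]
  adj x := by
    by_cases hx : x ∈ S
    · simpa [hx] using hg.adj x
    · simpa [hx] using hf.adj x

lemma IsMatchingInvolution.conj {f : V → V} (hf : G.IsMatchingInvolution f) (φ : G ≃g G) :
    G.IsMatchingInvolution (φ ∘ f ∘ φ.symm) where
  involutive x := by simp [hf.involutive _]
  adj x hx := by
    have hne : f (φ.symm x) ≠ φ.symm x := fun h => hx (by simp [h])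
    simpa using φ.map_rel_iff.2 (hf.adj _ hne)

lemma isMatchingInvolution_swap [DecidableEq V] {u v : V} (huv : G.Adj u v) :
    G.IsMatchingInvolution (Equiv.swap u v) where
  involutive := Equiv.swap_apply_self u v
  adj x hx := by
    rcases eq_or_ne x u with rfl | hxu
    · simpa using huv
    · rcases eq_or_ne x v with rfl | hxv
      · simpa using huv.symm
      · exact absurd (Equiv.swap_apply_of_ne_of_ne hxu hxv) hx

section Counting

variable [Fintype V] [DecidableEq V]

lemma card_fixed_piecewise_add (f g : V → V) (S : Finset V) :
    #{x | S.piecewise g f x = x} + #{x ∈ S | f x = x} =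
      #{x | f x = x} + #{x ∈ S | g x = x} := by
  rw [← card_filter_add_card_filter_not (s := {x | S.piecewise g f x = x}) (· ∈ S),
    ← card_filter_add_card_filter_not (s := {x | f x = x}) (· ∈ S)]
  simp only [filter_filter]
  have h1 : ({x | S.piecewise g f x = x ∧ x ∈ S} : Finset V) = {x ∈ S | g x = x} := by
    ext x; by_cases hx : x ∈ S <;> simp [hx]
  have h2 : ({x | S.piecewise g f x = x ∧ x ∉ S} : Finset V) =
      ({x | f x = x ∧ x ∉ S} : Finset V) := by
    ext x; by_cases hx : x ∈ S <;> simp [hx]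
  have h3 : ({x | f x = x ∧ x ∈ S} : Finset V) = {x ∈ S | f x = x} := by
    ext x; simp [and_comm]
  rw [h1, h2, h3]
  omega

lemma card_fixed_conj (f : V → V) (φ : G ≃g G) :
    #{x | (φ ∘ f ∘ φ.symm) x = x} = #{x | f x = x} := by
  refine card_bij (fun x _ => φ.symm x) (fun x hx => ?_) (fun _ _ _ _ h => φ.symm.injective h)
    (fun y hy => ⟨φ y, ?_, by simp⟩)
  · simp only [mem_filter, mem_univ, true_and, Function.comp_apply] at hx ⊢
    simpa using congrArg φ.symm hx
  · simp only [mem_filter, mem_univ, true_and, Function.comp_apply] at hy ⊢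
    simp [hy]

end Counting

/-- For two matchings `f` and `g`, the components of this graph are the alternating paths and
cycles of `f` and `g`. -/
def alternatingGraph (f g : V → V) : SimpleGraph V :=
  fromRel fun x y => y = f x ∨ y = g x

instance [DecidableEq V] (f g : V → V) : DecidableRel (alternatingGraph f g).Adj :=
  fun _ _ => inferInstanceAs (Decidable (_ ∧ _))

section alternatingGraph

variable {f g : V → V} {u x : V}

lemma Reachable.alternatingGraph_apply_left (h : (alternatingGraph f g).Reachable u x) :
    (alternatingGraph f g).Reachable u (f x) := by
  by_cases hx : f x = x
  · rwa [hx]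
  · exact h.trans (Adj.reachable ⟨Ne.symm hx, .inl (.inl rfl)⟩)

lemma Reachable.alternatingGraph_apply_right (h : (alternatingGraph f g).Reachable u x) :
    (alternatingGraph f g).Reachable u (g x) := by
  by_cases hx : g x = x
  · rwa [hx]
  · exact h.trans (Adj.reachable ⟨Ne.symm hx, .inl (.inr rfl)⟩)

variable [Fintype V] [DecidableEq V]

lemma degree_alternatingGraph_add_le (hf : Function.Involutive f) (hg : Function.Involutive g)
    (x : V) :
    (alternatingGraph f g).degree x + (if f x = x then 1 else 0) + (if g x = x then 1 else 0)
      ≤ 2 := by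
  have hsub : (alternatingGraph f g).neighborFinset x ⊆ ({f x, g x} : Finset V).erase x := by
    intro y hy
    rw [mem_neighborFinset] at hy
    obtain ⟨hxy, (rfl | rfl) | (rfl | rfl)⟩ := hy
    · simp [Ne.symm hxy]
    · simp [Ne.symm hxy]
    · simp [hf y, Ne.symm hxy]
    · simp [hg y, Ne.symm hxy]
  have hpair : ∀ a b : V, #(({a, b} : Finset V).erase x) + (if a = x then 1 else 0) +
      (if b = x then 1 else 0) ≤ 2 := fun a b => by
    by_cases ha : a = x <;> by_cases hb : b = x <;> subst_vars <;> simp [*, erase_insert_eq_erase]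
    · exact card_erase_le.trans (card_singleton _).le
    · exact card_erase_le.trans card_le_two
  rw [← card_neighborFinset_eq_degree]
  linarith [card_le_card hsub, hpair (f x) (g x)]

/-- A component with `n` vertices has at least `n - 1` edges, while every vertex has degree at
most `2`, less one for each of `f`, `g` fixing it. -/
lemma card_fixed_reachable_alternatingGraph_le (hf : Function.Involutive f)
    (hg : Function.Involutive g) (u : V) :
    #{x | (alternatingGraph f g).Reachable u x ∧ f x = x} +
      #{x | (alternatingGraph f g).Reachable u x ∧ g x = x} ≤ 2 := by
  have h := two_mul_card_reachable_le (alternatingGraph f g) u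
  have hsum := sum_le_sum (s := {x | (alternatingGraph f g).Reachable u x})
    fun x _ => degree_alternatingGraph_add_le hf hg x
  simp only [sum_add_distrib, sum_const, smul_eq_mul] at hsum
  simp only [card_filter, sum_filter, ite_and] at h hsum ⊢
  omega

end alternatingGraph

section Maximum

variable [Fintype V] [DecidableEq V]

variable (G) in
def IsMaximumMatchingInvolution (f : V → V) : Prop :=
  G.IsMatchingInvolution f ∧ ∀ g, G.IsMatchingInvolution g → #{v | f v = v} ≤ #{v | g v = v}

variable (G) in
lemma exists_isMaximumMatchingInvolution : ∃ f, G.IsMaximumMatchingInvolution f := by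
  obtain ⟨f, hf, hmin⟩ := Set.exists_min_image {f : V → V | G.IsMatchingInvolution f}
    (fun f => #{v | f v = v}) (Set.toFinite _) ⟨id, fun _ => rfl, fun _ h => absurd rfl h⟩
  exact ⟨f, hf, hmin⟩

lemma IsMaximumMatchingInvolution.conj {f : V → V} (hf : G.IsMaximumMatchingInvolution f)
    (φ : G ≃g G) : G.IsMaximumMatchingInvolution (φ ∘ f ∘ φ.symm) :=
  ⟨hf.1.conj φ, fun g hg => card_fixed_conj f φ ▸ hf.2 g hg⟩

lemma IsMaximumMatchingInvolution.not_adj {f : V → V} (hf : G.IsMaximumMatchingInvolution f)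
    {u v : V} (hu : f u = u) (hv : f v = v) : ¬G.Adj u v := by
  intro huv
  have hS : ∀ x ∈ ({u, v} : Finset V), f x ∈ ({u, v} : Finset V) := by simp [hu, hv]
  have hswap : ∀ x ∈ ({u, v} : Finset V), Equiv.swap u v x ∈ ({u, v} : Finset V) := by simp
  have hle := hf.2 _ (hf.1.piecewise (isMatchingInvolution_swap huv) hS hswap)
  have hcount := card_fixed_piecewise_add f (Equiv.swap u v) {u, v}
  have hne : u ≠ v := huv.ne
  have h2 : #{x ∈ ({u, v} : Finset V) | f x = x} = 2 := by
    rw [filter_true_of_mem (by simp [hu, hv]), card_pair hne]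
  have h0 : #{x ∈ ({u, v} : Finset V) | Equiv.swap u v x = x} = 0 := by
    simp [hne, hne.symm, Equiv.swap_apply_left, Equiv.swap_apply_right]
  omega

lemma IsMaximumMatchingInvolution.piecewise_reachable {M N : V → V}
    (hM : G.IsMaximumMatchingInvolution M) (hN : G.IsMaximumMatchingInvolution N) {u : V}
    (hu : M u = u) :
    (∀ x, (alternatingGraph M N).Reachable u x → M x = x → x = u) ∧
      G.IsMaximumMatchingInvolution
        (({x | (alternatingGraph M N).Reachable u x} : Finset V).piecewise M N) := by
  set S : Finset V := {x | (alternatingGraph M N).Reachable u x}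
  have hMS : ∀ x ∈ S, M x ∈ S := by
    simpa [S] using fun x hx => hx.alternatingGraph_apply_left
  have hNS : ∀ x ∈ S, N x ∈ S := by
    simpa [S] using fun x hx => hx.alternatingGraph_apply_right
  have hMN := hN.1.piecewise hM.1 hNS hMS
  have hNM := hM.1.piecewise hN.1 hMS hNS
  have hcMN := card_fixed_piecewise_add N M S
  have hcNM := card_fixed_piecewise_add M N S
  have hle : #{x ∈ S | M x = x} + #{x ∈ S | N x = x} ≤ 2 := by
    simpa only [S, filter_filter] using
      card_fixed_reachable_alternatingGraph_le hM.1.involutive hN.1.involutive u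
  -- exchanging `M` and `N` on `S` makes neither of them worse, so they miss equally many
  -- vertices of `S`, and `u` is one of them
  have hNle := hN.2 _ hMN
  have hMle := hM.2 _ hNM
  have huS : u ∈ ({x ∈ S | M x = x} : Finset V) := by simp [S, hu]
  have hone := card_pos.2 ⟨u, huS⟩
  refine ⟨fun x hx hMx => card_le_one.1 (by omega) x (by simp [S, hx, hMx]) u huS,
    hMN, fun g hg => ?_⟩
  have := hN.2 g hg
  omega

lemma IsMaximumMatchingInvolution.exists_dist_lt (hconn : G.Connected)
    (htrans : ∀ u v, ∃ φ : G ≃g G, φ u = v) {M : V → V}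
    (hM : G.IsMaximumMatchingInvolution M) {u v : V} (hu : M u = u) (hv : M v = v) (huv : u ≠ v) :
    ∃ N x y, G.IsMaximumMatchingInvolution N ∧ N x = x ∧ N y = y ∧ x ≠ y ∧
      G.dist x y < G.dist u v := by
  have h2 : 1 < G.dist u v := hconn.one_lt_dist_of_ne_of_not_adj huv (hM.not_adj hu hv)
  obtain ⟨p, hp⟩ := hconn.exists_walk_length_eq_dist u v
  cases p with
  | nil => exact absurd rfl huv
  | @cons _ w _ huw q =>
  have hwv : G.dist w v < G.dist u v := by
    have := dist_le q
    simp only [Walk.length_cons] at hp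
    omega
  have huw_lt : G.dist u w < G.dist u v := by rwa [dist_eq_one_iff_adj.2 huw]
  have hwv_ne : w ≠ v := by
    rintro rfl
    exact lt_irrefl _ huw_lt
  obtain ⟨φ, hφ⟩ := htrans u w
  set N := φ ∘ M ∘ φ.symm
  have hN : G.IsMaximumMatchingInvolution N := hM.conj φ
  have hNw : N w = w := by simp [N, ← hφ, hu]
  obtain ⟨hSu, hNu⟩ := hM.piecewise_reachable hN hu
  obtain ⟨-, hNv⟩ := hM.piecewise_reachable hN hv
  by_cases hRu : (alternatingGraph M N).Reachable u w
  · by_cases hRv : (alternatingGraph M N).Reachable v w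
    · exact absurd (hSu v (hRu.trans hRv.symm) hv).symm huv
    · exact ⟨_, w, v, hNv, by simp [hRv, hNw], by simp [hv], hwv_ne, hwv⟩
  · exact ⟨_, u, w, hNu, by simp [hu], by simp [hRu, hNw], huw.ne, huw_lt⟩

theorem exists_isMatchingInvolution_card_fixed_le_one (hconn : G.Connected)
    (htrans : ∀ u v, ∃ φ : G ≃g G, φ u = v) :
    ∃ f, G.IsMatchingInvolution f ∧ #{v | f v = v} ≤ 1 := by
  obtain ⟨M, hM⟩ := G.exists_isMaximumMatchingInvolution
  refine ⟨M, hM.1, ?_⟩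
  by_contra! h
  obtain ⟨u, hu, v, hv, huv⟩ := one_lt_card.1 h
  have descent : ∀ n M u v, G.IsMaximumMatchingInvolution M → M u = u → M v = v →
      u ≠ v → G.dist u v ≠ n := by
    intro n
    induction n using Nat.strong_induction_on with
    | _ n ih =>
      intro M u v hM hu hv huv hn
      obtain ⟨N, x, y, hN, hx, hy, hxy, hlt⟩ := hM.exists_dist_lt hconn htrans hu hv huv
      exact ih _ (hn ▸ hlt) N x y hN hx hy hxy rfl
  exact descent _ M u v hM (by simpa using hu) (by simpa using hv) huv rfl

end Maximum

end SimpleGraph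

lemma Finset.exists_card_eq_disjoint {α : Type*} [Fintype α] [DecidableEq α] (s : Finset α)
    {k : ℕ} (h : #s + k ≤ Fintype.card α) : ∃ t : Finset α, #t = k ∧ Disjoint s t := by
  obtain ⟨t, ht, htk⟩ := exists_subset_card_eq (s := sᶜ) (n := k) (by rw [card_compl]; omega)
  exact ⟨t, htk, disjoint_of_subset_right ht disjoint_compl_right⟩

lemma nonempty_subtype_card_eq {α : Type*} [Fintype α] {k : ℕ} (h : k ≤ Fintype.card α) :
    Nonempty {s : Finset α // #s = k} :=
  Fintype.card_pos_iff.1 (by rw [Fintype.card_finset_len]; exact Nat.choose_pos h)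

namespace SimpleGraph

def kneserGraph (α : Type*) (k : ℕ) : SimpleGraph {s : Finset α // #s = k} where
  Adj s t := s ≠ t ∧ Disjoint s.1 t.1
  symm := ⟨fun _ _ h => ⟨h.1.symm, h.2.symm⟩⟩
  loopless := ⟨fun _ h => h.1 rfl⟩

variable {α : Type*} {k : ℕ}

lemma kneserGraph_adj_of_disjoint {s t : {s : Finset α // #s = k}} (hk : k ≠ 0)
    (h : Disjoint s.1 t.1) : (kneserGraph α k).Adj s t := by
  refine ⟨fun hst => ?_, h⟩
  rw [hst, disjoint_self_iff_empty] at h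
  exact hk (t.2 ▸ h ▸ card_empty)

lemma kneserGraph_exists_iso_apply_eq [DecidableEq α] (s t : {s : Finset α // #s = k}) :
    ∃ φ : kneserGraph α k ≃g kneserGraph α k, φ s = t := by
  obtain ⟨σ, hσ⟩ := Equiv.Perm.exists_map_finset_eq s.1 t.1 (s.2.trans t.2.symm)
  refine ⟨⟨σ.finsetCongr.subtypeEquiv fun s => by simp, fun {a b} => ?_⟩,
    Subtype.ext (by simpa)⟩
  simp [kneserGraph, Equiv.subtypeEquiv, Subtype.ext_iff]

lemma kneserGraph_reachable_insert_erase [Fintype α] [DecidableEq α]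
    (hk : 2 * k < Fintype.card α) (s : {s : Finset α // #s = k}) {a b : α} (ha : a ∈ s.1)
    (hb : b ∉ s.1) :
    (kneserGraph α k).Reachable s ⟨insert b (s.1.erase a), by
      rw [card_insert_of_notMem (fun h => hb (mem_of_mem_erase h)), card_erase_of_mem ha, s.2]
      have := card_pos.2 ⟨a, ha⟩
      omega⟩ := by
  have hk0 : k ≠ 0 := by rw [← s.2]; exact (card_pos.2 ⟨a, ha⟩).ne'
  obtain ⟨c, hck, hc⟩ := (insert b s.1).exists_card_eq_disjoint (k := k) (by
    rw [card_insert_of_notMem hb, s.2]; omega)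
  have hs' : insert b (s.1.erase a) ⊆ insert b s.1 := insert_subset_insert _ (erase_subset _ _)
  have hsc := kneserGraph_adj_of_disjoint (t := ⟨c, hck⟩) hk0 (hc.mono_left (subset_insert _ _))
  exact hsc.reachable.trans (kneserGraph_adj_of_disjoint hk0 (hc.mono_left hs').symm).reachable

lemma kneserGraph_connected [Fintype α] [DecidableEq α] (hk : 2 * k < Fintype.card α) :
    (kneserGraph α k).Connected := by
  have key : ∀ n (s t : {s : Finset α // #s = k}), #(t.1 \ s.1) = n →
      (kneserGraph α k).Reachable s t := by
    intro n
    induction n with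
    | zero =>
      intro s t h
      rw [card_eq_zero, sdiff_eq_empty_iff_subset] at h
      rw [Subtype.ext (eq_of_subset_of_card_le h (by rw [s.2, t.2]))]
    | succ n ih =>
      intro s t h
      obtain ⟨b, hb⟩ : (t.1 \ s.1).Nonempty := card_pos.1 (by omega)
      obtain ⟨a, ha⟩ : (s.1 \ t.1).Nonempty := card_pos.1 (by
        rw [card_sdiff_comm (s.2.trans t.2.symm)]; omega)
      rw [mem_sdiff] at ha hb
      refine (kneserGraph_reachable_insert_erase hk s ha.1 hb.2).trans (ih _ _ ?_)
      have : t.1 \ insert b (s.1.erase a) = (t.1 \ s.1).erase b := by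
        ext x
        have := ha.2
        simp only [mem_sdiff, mem_insert, mem_erase]
        grind
      rw [this, card_erase_of_mem (mem_sdiff.2 hb), h, Nat.add_sub_cancel]
  have := nonempty_subtype_card_eq (α := α) (k := k) (by omega)
  exact (connected_iff _).2 ⟨fun s t => key _ s t rfl, this⟩

lemma kneserGraph_exists_isMatchingInvolution [Fintype α] [DecidableEq α]
    (hk : 2 * k ≤ Fintype.card α) :
    ∃ f, (kneserGraph α k).IsMatchingInvolution f ∧ #{s | f s = s} ≤ 1 := by
  rcases hk.lt_or_eq with hk | hk
  · exact exists_isMatchingInvolution_card_fixed_le_one (kneserGraph_connected hk)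
      kneserGraph_exists_iso_apply_eq
  set f : {s : Finset α // #s = k} → {s : Finset α // #s = k} :=
    fun s => ⟨s.1ᶜ, by rw [card_compl, s.2]; omega⟩
  have hfix : ∀ s, f s = s → s.1 = ∅ := fun s hs => by
    have : Disjoint s.1 s.1ᶜ := disjoint_compl_right
    rwa [show s.1ᶜ = s.1 from congrArg Subtype.val hs, disjoint_self_iff_empty] at this
  have hf : (kneserGraph α k).IsMatchingInvolution f :=
    ⟨fun s => Subtype.ext (compl_compl _), fun s hs => ⟨hs.symm, disjoint_compl_right⟩⟩
  refine ⟨f, hf, card_le_one.2 fun s hs t ht => Subtype.ext ?_⟩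
  rw [hfix s (by simpa using hs), hfix t (by simpa using ht)]

end SimpleGraph

lemma Function.Involutive.exists_two_mul_card_eq {α : Type*} [Fintype α] [DecidableEq α]
    {f : α → α} (hf : Function.Involutive f) :
    ∃ R : Finset α, 2 * #R = Fintype.card α + #{x | f x = x} ∧
      ∀ x, x ∈ R ∨ f x ∈ R := by
  set e := Fintype.equivFin α
  have hgt : #{x | e (f x) < e x} = #{x | e x < e (f x)} :=
    card_nbij' f f (fun x hx => by simpa [hf x] using hx) (fun x hx => by simpa [hf x] using hx)
      (fun x _ => hf x) (fun x _ => hf x)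
  have hle : #{x | e x ≤ e (f x)} = #{x | e x < e (f x)} + #{x | f x = x} := by
    rw [← card_union_of_disjoint (disjoint_filter.2 fun x _ h h' => by simp [h'] at h)]
    congr 1
    ext x
    simp [le_iff_lt_or_eq, e.injective.eq_iff, eq_comm]
  have htot : #{x | e x ≤ e (f x)} + #{x | e (f x) < e x} = Fintype.card α := by
    simp_rw [← not_le]
    exact card_filter_add_card_filter_not _
  refine ⟨({x | e x ≤ e (f x)} : Finset α), by omega, fun x => ?_⟩
  rcases le_total (e x) (e (f x)) with h | h
  · exact .inl (by simpa using h)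
  · exact .inr (by simpa [hf x] using h)

lemma Finset.exists_fin_subset_range {α : Type*} [Nonempty α] {R : Finset α} {ℓ : ℕ}
    (h : #R ≤ ℓ) : ∃ r : Fin ℓ → α, ↑R ⊆ Set.range r := by
  classical
  refine ⟨fun i => R.toList.getD i (Classical.arbitrary α), fun x hx => ?_⟩
  obtain ⟨i, hi, rfl⟩ := List.mem_iff_getElem.1 (mem_toList.2 hx)
  exact ⟨⟨i, by simp at hi; omega⟩, by simp [List.getElem?_eq_getElem hi]⟩

lemma exists_perm_image_eq_image_eq {α : Type*} [DecidableEq α] {s t s' t' : Finset α}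
    (hst : Disjoint s t) (hst' : Disjoint s' t') (hs : #s = #s') (ht : #t = #t') :
    ∃ σ : Equiv.Perm α, s.image σ = s' ∧ t.image σ = t' := by
  set e₁ := s.equivOfCardEq hs
  set e₂ := t.equivOfCardEq ht
  obtain ⟨σ, hσ⟩ := Equiv.Perm.exists_extending_pair (Sum.elim (↑) (↑) : s ⊕ t → α)
    (Sum.elim (fun x => ↑(e₁ x)) (fun x => ↑(e₂ x)))
    (Subtype.val_injective.sumElim Subtype.val_injective
      fun a b h => disjoint_left.1 hst a.2 (h ▸ b.2))
    ((Subtype.val_injective.comp e₁.injective).sumElim (Subtype.val_injective.comp e₂.injective)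
      fun a b h => disjoint_left.1 hst' (e₁ a).2 ((congrArg (· ∈ t') h).mpr (e₂ b).2))
  refine ⟨σ, eq_of_subset_of_card_le ?_ ?_, eq_of_subset_of_card_le ?_ ?_⟩
  · intro y hy
    obtain ⟨x, hx, rfl⟩ := mem_image.1 hy
    simpa using hσ (.inl ⟨x, hx⟩) ▸ (e₁ ⟨x, hx⟩).2
  · rw [card_image_of_injective _ σ.injective, hs]
  · intro y hy
    obtain ⟨x, hx, rfl⟩ := mem_image.1 hy
    simpa using hσ (.inr ⟨x, hx⟩) ▸ (e₂ ⟨x, hx⟩).2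
  · rw [card_image_of_injective _ σ.injective, ht]

lemma exists_perm_prefixSet_suffixSet {m k : ℕ} (hk : 2 * k ≤ m) {A B : Finset (Fin m)}
    (hA : #A = k) (hB : #B = k) (hAB : Disjoint A B) :
    ∃ σ : Equiv.Perm (Fin m), prefixSet m σ k = A ∧ suffixSet m σ k = B := by
  have hpre : #{i : Fin m | (i : ℕ) < k} = k := by
    rw [Fin.card_filter_val_lt]; omega
  have hsuf : #{i : Fin m | m - k ≤ (i : ℕ)} = k := by
    simp_rw [← not_lt]
    rw [filter_not, card_univ_sdiff, Fin.card_filter_val_lt, Fintype.card_fin]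
    omega
  exact exists_perm_image_eq_image_eq
    (disjoint_filter.2 fun i _ h h' => by omega) hAB (hpre.trans hA.symm) (hsuf.trans hB.symm)

open SimpleGraph in
theorem exists_disjoint_pairs_covering {α : Type*} [Fintype α] [DecidableEq α] {k ℓ : ℕ}
    (hk : 2 * k ≤ Fintype.card α) (hℓ : (Fintype.card α).choose k ≤ 2 * ℓ) :
    ∃ s t : Fin ℓ → Finset α, (∀ i, #(s i) = k ∧ #(t i) = k ∧ Disjoint (s i) (t i)) ∧
      ∀ A : Finset α, #A = k → ∃ i, A = s i ∨ A = t i := by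
  obtain ⟨f, hf, hfix⟩ := kneserGraph_exists_isMatchingInvolution hk
  obtain ⟨R, hR, hRf⟩ := hf.involutive.exists_two_mul_card_eq
  have hpartner : ∀ s, ∃ t : {s : Finset α // #s = k},
      Disjoint s.1 t.1 ∧ (f s ≠ s → t = f s) := by
    intro s
    by_cases hs : f s = s
    · obtain ⟨t, htk, ht⟩ := s.1.exists_card_eq_disjoint (k := k) (by rw [s.2]; omega)
      exact ⟨⟨t, htk⟩, ht, fun h => absurd hs h⟩
    · exact ⟨f s, (hf.adj s hs).2, fun _ => rfl⟩
  choose p hpd hpf using hpartner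
  have := nonempty_subtype_card_eq (α := α) (k := k) (by omega)
  obtain ⟨r, hr⟩ := exists_fin_subset_range (R := R) (ℓ := ℓ) (by
    rw [Fintype.card_finset_len] at hR; omega)
  have hcover : ∀ v, ∃ i, r i = v ∨ p (r i) = v := by
    intro v
    by_cases hv : f v = v
    · obtain ⟨i, hi⟩ := hr ((hRf v).elim id (hv ▸ ·))
      exact ⟨i, .inl hi⟩
    rcases hRf v with hvR | hfvR
    · obtain ⟨i, hi⟩ := hr hvR
      exact ⟨i, .inl hi⟩
    · obtain ⟨i, hi⟩ := hr hfvR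
      refine ⟨i, .inr ?_⟩
      rw [hi, hpf _ (by rwa [hf.involutive v, ne_comm]), hf.involutive v]
  refine ⟨fun i => r i, fun i => p (r i), fun i => ⟨(r i).2, (p (r i)).2, hpd _⟩,
    fun A hA => ?_⟩
  obtain ⟨i, hi⟩ := hcover ⟨A, hA⟩
  exact ⟨i, hi.imp (congrArg Subtype.val ·.symm) (congrArg Subtype.val ·.symm)⟩

theorem exists_permutations_separating_half_subsets_general
    (m ℓ : ℕ) (h : m.choose (m / 2) ≤ 2 * ℓ) :
    ∃ σ : Fin ℓ → Equiv.Perm (Fin m),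
      ∀ A : Finset (Fin m), A.card = m / 2 →
        ∃ i : Fin ℓ, A = prefixSet m (σ i) (m / 2) ∨ A = suffixSet m (σ i) (m / 2) := by
  obtain ⟨s, t, hst, hcover⟩ := exists_disjoint_pairs_covering (α := Fin m) (k := m / 2)
    (by simp; omega) (by simpa using h)
  choose σ hσ using fun i =>
    exists_perm_prefixSet_suffixSet (by omega) (hst i).1 (hst i).2.1 (hst i).2.2
  refine ⟨σ, fun A hA => ?_⟩
  obtain ⟨i, hi⟩ := hcover A hA
  exact ⟨i, by rwa [(hσ i).1, (hσ i).2]⟩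

theorem exists_permutations_separating_half_subsets
    (m ℓ : ℕ) (hm : 2 ≤ m) (hℓ : 1 ≤ ℓ) (h : m.choose (m / 2) ≤ 2 * ℓ) :
    ∃ σ : Fin ℓ → Equiv.Perm (Fin m),
      ∀ A : Finset (Fin m), A.card = m / 2 →
        ∃ i : Fin ℓ, A = prefixSet m (σ i) (m / 2) ∨ A = suffixSet m (σ i) (m / 2) :=
  exists_permutations_separating_half_subsets_general m ℓ h
end

section
/- Let m ≥ 4 and 2 ≤ k ≤ ⌊m/2⌋, and suppose σ⁽¹⁾, …, σ⁽ℓ⁾ are permutations of {1,…,m} such that for every j with k ≤ j ≤ ⌊m/2⌋, every j-element subset of {1,…,m} is the prefix-set of length j or the suffix-set of length j of some σ⁽ⁱ⁾. Then there exist permutations τ⁽¹⁾, …, τ⁽ℓ⁾ of {1,…,m} such that for every j with k−1 ≤ j ≤ ⌊m/2⌋, every j-element subset of {1,…,m} is the prefix-set of length j or the suffix-set of length j of some τ⁽ⁱ⁾. -/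
open Finset

theorem exists_injective_of_card_le_of_card_filter_le {ι α : Type*} [Fintype ι] [DecidableEq α]
    (t : ι → Finset α) {d : ℕ} (hd : 0 < d) (hι : ∀ i, d ≤ #(t i))
    (hα : ∀ a, #{i | a ∈ t i} ≤ d) :
    ∃ f : ι → α, Function.Injective f ∧ ∀ i, f i ∈ t i := by
  refine (all_card_le_biUnion_card_iff_exists_injective t).mp fun S => ?_
  have hdouble := card_mul_le_card_mul (fun i a => a ∈ t i) (s := S) (t := S.biUnion t)
    (m := d) (n := d) (fun i hi => ?_)
    fun a _ => (card_le_card (filter_subset_filter _ (subset_univ S))).trans (hα a)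
  · exact Nat.le_of_mul_le_mul_right hdouble hd
  · rw [bipartiteAbove, filter_mem_eq_inter, inter_eq_right.mpr (subset_biUnion_of_mem t hi)]
    exact hι i

theorem exists_injective_subset_of_cover {α κ : Type*} [Fintype α] [DecidableEq α]
    [Fintype κ] [DecidableEq κ] (B : κ → Finset α) {k : ℕ} (hk : 2 * k + 1 ≤ Fintype.card α)
    (hB : ∀ s, #(B s) = k + 1) (hcover : ∀ C : Finset α, #C = k + 1 → ∃ s, B s = C) :
    ∃ f : {A : Finset α // #A = k} → κ, Function.Injective f ∧ ∀ A, A.1 ⊆ B (f A) := by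
  have hsupersets (A : {A : Finset α // #A = k}) : k + 1 ≤ #{s | A.1 ⊆ B s} := by
    calc k + 1 ≤ #A.1ᶜ := by rw [card_compl, A.2]; omega
      _ ≤ #{s | A.1 ⊆ B s} := card_le_card_of_forall_subsingleton (fun x s => B s = insert x A.1)
          (fun x hx => ?_) fun s _ x hx y hy => ?_
    · obtain ⟨s, hs⟩ :=
        hcover (insert x A.1) (by rw [card_insert_of_notMem (mem_compl.mp hx), A.2])
      exact ⟨s, by simp [hs, subset_insert], hs⟩
    · exact (insert_inj (mem_compl.mp hx.1)).mp (hx.2.symm.trans hy.2)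
  have hsubsets (s : κ) : #{A : {A : Finset α // #A = k} | A.1 ⊆ B s} ≤ k + 1 := by
    calc #{A : {A : Finset α // #A = k} | A.1 ⊆ B s} ≤ #((B s).powersetCard k) :=
          card_le_card_of_injOn Subtype.val (fun A hA => by simpa [A.2] using hA)
            Subtype.val_injective.injOn
      _ = k + 1 := by rw [card_powersetCard, hB, Nat.choose_succ_self_right]
  obtain ⟨f, hf, hfB⟩ := exists_injective_of_card_le_of_card_filter_le
    (fun A : {A : Finset α // #A = k} => {s | A.1 ⊆ B s}) k.succ_pos hsupersets
    (by simpa using hsubsets)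
  exact ⟨f, hf, fun A => (mem_filter.mp (hfB A)).2⟩

theorem exists_subset_card_eq_surjective_of_cover {α κ : Type*} [Fintype α] [DecidableEq α]
    [Fintype κ] [DecidableEq κ] (B : κ → Finset α) {k : ℕ} (hk : 2 * k + 1 ≤ Fintype.card α)
    (hB : ∀ s, #(B s) = k + 1) (hcover : ∀ C : Finset α, #C = k + 1 → ∃ s, B s = C) :
    ∃ g : κ → Finset α, (∀ s, g s ⊆ B s ∧ #(g s) = k) ∧
      ∀ A : Finset α, #A = k → ∃ s, g s = A := by
  obtain ⟨f, hf, hfB⟩ := exists_injective_subset_of_cover B hk hB hcover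
  have hg (s : κ) : ∃ A ⊆ B s, #A = k ∧ ∀ A' : {A : Finset α // #A = k}, f A' = s → A = A'.1 := by
    by_cases h : ∃ A', f A' = s
    · obtain ⟨A', rfl⟩ := h
      exact ⟨A'.1, hfB A', A'.2, fun A'' h => congrArg Subtype.val (hf h).symm⟩
    · obtain ⟨A, hA, hAk⟩ := exists_subset_card_eq (s := B s) (n := k) (by rw [hB]; omega)
      exact ⟨A, hA, hAk, fun A' h' => absurd ⟨A', h'⟩ h⟩
  choose g hgB hgk hgf using hg
  exact ⟨g, fun s => ⟨hgB s, hgk s⟩, fun A hA => ⟨f ⟨A, hA⟩, hgf _ _ rfl⟩⟩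

variable {m : ℕ}

theorem mem_prefixSet {σ : Equiv.Perm (Fin m)} {j : ℕ} {a : Fin m} :
    a ∈ prefixSet m σ j ↔ (σ.symm a : ℕ) < j := by
  simp [prefixSet, ← Equiv.eq_symm_apply]

theorem mem_suffixSet {σ : Equiv.Perm (Fin m)} {j : ℕ} {a : Fin m} :
    a ∈ suffixSet m σ j ↔ m - j ≤ (σ.symm a : ℕ) := by
  simp [suffixSet, ← Equiv.eq_symm_apply]

theorem prefixSet_mul_revPerm (σ : Equiv.Perm (Fin m)) (j : ℕ) :
    prefixSet m (σ * Fin.revPerm) j = suffixSet m σ j := by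
  ext a
  simp only [mem_prefixSet, mem_suffixSet, Equiv.Perm.mul_def, Equiv.symm_trans_apply,
    Fin.revPerm_symm, Fin.revPerm_apply, Fin.val_rev]
  omega

theorem suffixSet_mul_revPerm (σ : Equiv.Perm (Fin m)) (j : ℕ) :
    suffixSet m (σ * Fin.revPerm) j = prefixSet m σ j := by
  ext a
  simp only [mem_prefixSet, mem_suffixSet, Equiv.Perm.mul_def, Equiv.symm_trans_apply,
    Fin.revPerm_symm, Fin.revPerm_apply, Fin.val_rev]
  omega

theorem card_prefixSet (σ : Equiv.Perm (Fin m)) {j : ℕ} (hj : j ≤ m) :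
    #(prefixSet m σ j) = j := by
  rw [prefixSet, card_image_of_injective _ σ.injective, Fin.card_filter_val_lt, min_eq_right hj]

theorem card_suffixSet (σ : Equiv.Perm (Fin m)) {j : ℕ} (hj : j ≤ m) :
    #(suffixSet m σ j) = j := by
  rw [← prefixSet_mul_revPerm, card_prefixSet _ hj]

theorem exists_prefixSet_eq_of_subset (σ : Equiv.Perm (Fin m)) {k : ℕ} (hkm : k < m)
    {A : Finset (Fin m)} (hA : A ⊆ prefixSet m σ (k + 1)) (hAk : #A = k) :
    ∃ τ : Equiv.Perm (Fin m), prefixSet m τ k = A ∧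
      (∀ j, k < j → prefixSet m τ j = prefixSet m σ j) ∧
      ∀ j, j + k < m → suffixSet m τ j = suffixSet m σ j := by
  obtain ⟨x, hxσ, hxA⟩ := exists_mem_notMem_of_card_lt_card
    (by rw [hAk, card_prefixSet σ hkm]; omega : #A < #(prefixSet m σ (k + 1)))
  have hA_eq : A = (prefixSet m σ (k + 1)).erase x :=
    eq_of_subset_of_card_le (subset_erase.mpr ⟨hA, hxA⟩)
      (by rw [card_erase_of_mem hxσ, card_prefixSet σ hkm, hAk]; omega)
  obtain ⟨p, hp, rfl⟩ := mem_image.mp hxσ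
  -- swap position `k` with the position `p` of the missing element; each claim is then a case
  -- split on the position `σ⁻¹ a`
  refine ⟨σ * Equiv.swap ⟨k, hkm⟩ p, ?_, fun j hj => ?_, fun j hj => ?_⟩ <;> ext a <;>
    simp only [hA_eq, mem_erase, mem_prefixSet, mem_suffixSet, Equiv.Perm.mul_def,
      Equiv.symm_trans_apply, Equiv.symm_swap, ne_eq, ← Equiv.symm_apply_eq] <;>
    generalize σ.symm a = u <;> simp only [mem_filter, mem_univ, true_and] at hp <;>
    rw [Equiv.swap_apply_def] <;> split_ifs <;> simp_all [Fin.ext_iff] <;> omega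

theorem exists_prefixSet_suffixSet_eq (σ : Equiv.Perm (Fin m)) {k : ℕ} (hkm : 2 * k + 2 ≤ m)
    {A B : Finset (Fin m)} (hA : A ⊆ prefixSet m σ (k + 1)) (hAk : #A = k)
    (hB : B ⊆ suffixSet m σ (k + 1)) (hBk : #B = k) :
    ∃ τ : Equiv.Perm (Fin m), prefixSet m τ k = A ∧ suffixSet m τ k = B ∧
      ∀ j, k < j → j + k < m →
        prefixSet m τ j = prefixSet m σ j ∧ suffixSet m τ j = suffixSet m σ j := by
  obtain ⟨ρ, hρk, hρpre, hρsuf⟩ := exists_prefixSet_eq_of_subset σ (by omega) hA hAk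
  have hB' : B ⊆ prefixSet m (ρ * Fin.revPerm) (k + 1) := by
    rwa [prefixSet_mul_revPerm, hρsuf _ (by omega)]
  obtain ⟨π, hπk, hπpre, hπsuf⟩ := exists_prefixSet_eq_of_subset _ (by omega) hB' hBk
  refine ⟨π * Fin.revPerm, ?_, by rw [suffixSet_mul_revPerm, hπk], fun j hkj hjm => ⟨?_, ?_⟩⟩
  · rw [prefixSet_mul_revPerm, hπsuf _ (by omega), suffixSet_mul_revPerm, hρk]
  · rw [prefixSet_mul_revPerm, hπsuf _ hjm, suffixSet_mul_revPerm, hρpre _ hkj]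
  · rw [suffixSet_mul_revPerm, hπpre _ hkj, prefixSet_mul_revPerm, hρsuf _ hjm]

theorem separating_permutations_induction_step_general
    (m k ℓ : ℕ) (hk2 : k ≤ m / 2)
    (σ : Fin ℓ → Equiv.Perm (Fin m))
    (hσ : ∀ j, k ≤ j → j ≤ m / 2 → ∀ A : Finset (Fin m), A.card = j →
      ∃ i : Fin ℓ, A = prefixSet m (σ i) j ∨ A = suffixSet m (σ i) j) :
    ∃ τ : Fin ℓ → Equiv.Perm (Fin m),
      ∀ j, k - 1 ≤ j → j ≤ m / 2 → ∀ A : Finset (Fin m), A.card = j →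
        ∃ i : Fin ℓ, A = prefixSet m (τ i) j ∨ A = suffixSet m (τ i) j := by
  rcases k with _ | k
  · exact ⟨σ, fun j _ => hσ j j.zero_le⟩
  have hkm : 2 * k + 2 ≤ m := by omega
  let slot : Fin ℓ ⊕ Fin ℓ → Finset (Fin m) :=
    Sum.elim (fun i => prefixSet m (σ i) (k + 1)) (fun i => suffixSet m (σ i) (k + 1))
  obtain ⟨g, hg, hg_surj⟩ :=
    exists_subset_card_eq_surjective_of_cover slot (k := k) (by simp; omega)
      (by rintro (i | i) <;> simp [slot, card_prefixSet, card_suffixSet, show k + 1 ≤ m by omega])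
      fun C hC => by
        obtain ⟨i, hi | hi⟩ := hσ (k + 1) le_rfl hk2 C hC
        exacts [⟨.inl i, hi.symm⟩, ⟨.inr i, hi.symm⟩]
  choose τ hτpre hτsuf hτ using fun i => exists_prefixSet_suffixSet_eq (σ i) hkm
    (hg (.inl i)).1 (hg (.inl i)).2 (hg (.inr i)).1 (hg (.inr i)).2
  refine ⟨τ, fun j hkj hjm A hA => ?_⟩
  obtain rfl | hkj : j = k ∨ k < j := by omega
  · obtain ⟨i | i, rfl⟩ := hg_surj A hA
    exacts [⟨i, .inl (hτpre i).symm⟩, ⟨i, .inr (hτsuf i).symm⟩]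
  · obtain ⟨i, hi⟩ := hσ j hkj hjm A hA
    obtain ⟨hpre, hsuf⟩ := hτ i j hkj (by omega)
    exact ⟨i, by rwa [hpre, hsuf]⟩

theorem separating_permutations_induction_step
    (m k ℓ : ℕ) (hm : 4 ≤ m) (hk : 2 ≤ k) (hk2 : k ≤ m / 2)
    (σ : Fin ℓ → Equiv.Perm (Fin m))
    (hσ : ∀ j, k ≤ j → j ≤ m / 2 → ∀ A : Finset (Fin m), A.card = j →
      ∃ i : Fin ℓ, A = prefixSet m (σ i) j ∨ A = suffixSet m (σ i) j) :
    ∃ τ : Fin ℓ → Equiv.Perm (Fin m),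
      ∀ j, k - 1 ≤ j → j ≤ m / 2 → ∀ A : Finset (Fin m), A.card = j →
        ∃ i : Fin ℓ, A = prefixSet m (τ i) j ∨ A = suffixSet m (τ i) j :=
  separating_permutations_induction_step_general m k ℓ hk2 σ hσ
end
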